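/- arXiv:2505.09736 — 5 statements merged into one kernel-verified Lean document; each statement's English description precedes it below -/
import Mathlib

section
/- A nontrivial complete cone is not taut: if U is a nonzero integral n-cycle and x ∉ Vert(U), then cone(x,U) is not a taut filling of U, i.e., Zvol(U) < |cone(x,U)|. -/
/-- Oriented `n`-simplices on vertex set `ℕ`, represented by their vertex sets
(of size `n+1`), with the orientation given by increasing order. -/
abbrev Simp (n : ℕ) : Type := {s : Finset ℕ // s.card = n + 1}

/-- Simplicial `n`-chains with coefficients in `R`. -/
abbrev GChain (R : Type) [CommRing R] (n : ℕ) : Type := Simp n →₀ R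

/-- Integral simplicial `n`-chains. -/
abbrev ZChain (n : ℕ) : Type := GChain ℤ n

/-- Boundary of a single oriented `(n+1)`-simplex. -/
noncomputable def simpBdry (R : Type) [CommRing R] {n : ℕ} (s : Simp (n + 1)) :
    GChain R n :=
  ∑ v ∈ (s : Finset ℕ).attach,
    ((-1 : R) ^ (((s : Finset ℕ).filter (· < (v : ℕ))).card)) •
      Finsupp.single
        ⟨(s : Finset ℕ).erase (v : ℕ), by
          have hv := v.2
          simp [Finset.card_erase_of_mem hv, s.2]⟩ 1

/-- The simplicial boundary operator. -/
noncomputable def bdry {R : Type} [CommRing R] {n : ℕ} (M : GChain R (n + 1)) :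
    GChain R n :=
  M.sum fun s c => c • simpBdry R s

/-- The `L¹`-norm of an integral chain. -/
noncomputable def znorm {n : ℕ} (M : ZChain n) : ℕ :=
  M.sum fun _ c => c.natAbs

/-- The set of vertices of simplices with nonzero coefficient. -/
noncomputable def vert {R : Type} [CommRing R] {n : ℕ} (M : GChain R n) : Finset ℕ :=
  M.support.sup fun s => (s : Finset ℕ)

/-- The chain is supported on simplices with vertices in `A`. -/
def suppOn {R : Type} [CommRing R] {n : ℕ} (A : Finset ℕ) (M : GChain R n) : Prop :=
  ∀ s ∈ M.support, (s : Finset ℕ) ⊆ A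

/-- Total multiplicity in `M` of simplices containing the vertex `x`. -/
noncomputable def zdeg {n : ℕ} (x : ℕ) (M : ZChain n) : ℕ :=
  M.sum fun s c => if x ∈ (s : Finset ℕ) then c.natAbs else 0

/-- Maximum vertex degree of an integral chain. -/
noncomputable def zmaxdeg {n : ℕ} (M : ZChain n) : ℕ :=
  (vert M).sup fun x => zdeg x M

/-- The cone from the vertex `x` over the chain `U`: each oriented simplex of `U`
gets `x` adjoined as a new first vertex; simplices already containing `x`
contribute `0`. -/
noncomputable def cone {n : ℕ} (x : ℕ) (U : ZChain n) : ZChain (n + 1) :=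
  U.sum fun s c =>
    if h : x ∈ (s : Finset ℕ) then 0
    else
      (((-1 : ℤ) ^ (((s : Finset ℕ).filter (· < x)).card)) * c) •
        Finsupp.single ⟨insert x (s : Finset ℕ), by
          simp [Finset.card_insert_of_notMem h, s.2]⟩ 1

/-- `Zvol X`: the minimal `L¹`-norm of an integral filling of `X`. -/
noncomputable def zvol {n : ℕ} (X : ZChain n) : ℕ :=
  sInf {m : ℕ | ∃ M : ZChain (n + 1), bdry M = X ∧ znorm M = m}

/-- A chain is taut if it is an optimal filling of its boundary. -/
def Taut {n : ℕ} (M : ZChain (n + 1)) : Prop :=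
  znorm M = zvol (bdry M)

/-!
Coning from a vertex `y` is a chain homotopy from the identity to zero: `∂(y * M) + y * ∂M = M`,
so `y * U` fills the cycle `U`. Coning kills the simplices through `y` and maps the others
injectively, so `‖y * M‖ + deg_y M = ‖M‖`. For `x ∉ Vert U` this gives `‖x * U‖ = ‖U‖`,
while a vertex `y` of a simplex of `U` has positive degree, so `y * U` is a strictly smaller
filling.
-/

open Finset

section Homotopy

variable {n : ℕ}

/-- The chain `c • t`, read as `0` when `t` does not have `m + 1` vertices; this keeps cardinality
proofs out of face computations. -/
noncomputable def singleSimp (m : ℕ) (t : Finset ℕ) (c : ℤ) : ZChain m :=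
  if h : #t = m + 1 then Finsupp.single ⟨t, h⟩ c else 0

lemma singleSimp_of_card {m : ℕ} {t : Finset ℕ} (h : #t = m + 1) (c : ℤ) :
    singleSimp m t c = Finsupp.single ⟨t, h⟩ c :=
  dif_pos h

lemma singleSimp_neg_add_singleSimp (m : ℕ) (t : Finset ℕ) (c : ℤ) :
    singleSimp m t (-c) + singleSimp m t c = 0 := by
  unfold singleSimp
  split <;> simp

lemma cone_zero (x : ℕ) : cone x (0 : ZChain n) = 0 := by
  simp [cone]

lemma cone_add (x : ℕ) (A B : ZChain n) : cone x (A + B) = cone x A + cone x B := by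
  refine Finsupp.sum_add_index' (fun s => by split <;> simp) fun s c₁ c₂ => ?_
  split
  · simp
  · rw [mul_add, add_smul]

lemma cone_sum {ι : Type*} (x : ℕ) (t : Finset ι) (f : ι → ZChain n) :
    cone x (∑ i ∈ t, f i) = ∑ i ∈ t, cone x (f i) :=
  map_sum (AddMonoidHom.mk' (cone x) (cone_add x)) f t

lemma bdry_add {R : Type} [CommRing R] (A B : GChain R (n + 1)) :
    bdry (A + B) = bdry A + bdry B :=
  Finsupp.sum_add_index' (fun _ => zero_smul R _) fun _ _ _ => add_smul _ _ _

lemma cone_singleSimp (x : ℕ) {t : Finset ℕ} (ht : #t = n + 1) (c : ℤ) :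
    cone x (singleSimp n t c) =
      if x ∈ t then 0 else singleSimp (n + 1) (insert x t) ((-1) ^ #{u ∈ t | u < x} * c) := by
  rw [singleSimp_of_card ht, cone, Finsupp.sum_single_index (by split <;> simp)]
  split_ifs with hx
  · rfl
  · rw [singleSimp_of_card (by rw [card_insert_of_notMem hx, ht]), Finsupp.smul_single_one]

lemma bdry_singleSimp {t : Finset ℕ} (ht : #t = n + 2) (c : ℤ) :
    bdry (singleSimp (n + 1) t c) =
      ∑ v ∈ t, singleSimp n (t.erase v) (c * (-1) ^ #{u ∈ t | u < v}) := by
  rw [singleSimp_of_card ht, bdry, Finsupp.sum_single_index (by simp), simpBdry, smul_sum,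
    ← sum_attach t]
  refine sum_congr rfl fun v _ => ?_
  rw [singleSimp_of_card, smul_smul, Finsupp.smul_single_one]

/-- Inserting `y` raises the rank of `v` by one iff `y < v`, and erasing `v` lowers the rank of `y`
by one iff `v < y`; exactly one of the two happens. This is why the faces of `∂(y * s)` and
`y * ∂s` cancel. -/
lemma card_filter_lt_insert_add {s : Finset ℕ} {y v : ℕ} (hy : y ∉ s) (hv : v ∈ s) :
    #{u ∈ insert y s | u < v} + #{u ∈ s | u < y} =
      #{u ∈ s | u < v} + #{u ∈ s.erase v | u < y} + 1 := by
  have hvy : v ≠ y := fun h => hy (h ▸ hv)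
  rw [filter_insert, filter_erase]
  rcases hvy.lt_or_gt with hlt | hgt
  · rw [if_neg (by omega),
      ← card_erase_add_one (show v ∈ {u ∈ s | u < y} from mem_filter.mpr ⟨hv, hlt⟩)]
    ring
  · rw [if_pos hgt, card_insert_of_notMem (fun h => hy (mem_filter.mp h).1),
      erase_eq_of_notMem (fun h => (mem_filter.mp h).2.not_gt hgt)]
    ring

lemma cone_bdry_singleSimp_of_mem {y : ℕ} {s : Finset ℕ} (hs : #s = n + 2) (hy : y ∈ s)
    (c : ℤ) :
    cone y (bdry (singleSimp (n + 1) s c)) = singleSimp (n + 1) s c := by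
  have hface : ∀ v ∈ s, #(s.erase v) = n + 1 := fun v hv => by
    rw [card_erase_of_mem hv, hs]; rfl
  rw [bdry_singleSimp hs, cone_sum, sum_eq_single_of_mem y hy fun v hv hvy => by
    rw [cone_singleSimp y (hface v hv), if_pos (mem_erase.mpr ⟨hvy.symm, hy⟩)]]
  rw [cone_singleSimp y (hface y hy), if_neg (notMem_erase y s), insert_erase hy, filter_erase,
    erase_eq_of_notMem (fun h => (mem_filter.mp h).2.false), mul_left_comm, ← pow_add,
    Even.neg_one_pow ⟨_, rfl⟩, mul_one]

lemma bdry_cone_add_cone_bdry_singleSimp_of_notMem {y : ℕ} {s : Finset ℕ} (hs : #s = n + 2)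
    (hy : y ∉ s) (c : ℤ) :
    bdry (cone y (singleSimp (n + 1) s c)) + cone y (bdry (singleSimp (n + 1) s c)) =
      singleSimp (n + 1) s c := by
  have hface : ∀ v ∈ s, #(s.erase v) = n + 1 := fun v hv => by
    rw [card_erase_of_mem hv, hs]; rfl
  set a := #{u ∈ s | u < y}
  have hfaces_cancel : ∀ v ∈ s,
      singleSimp (n + 1) ((insert y s).erase v)
          ((-1) ^ a * c * (-1) ^ #{u ∈ insert y s | u < v}) +
        cone y (singleSimp n (s.erase v) (c * (-1) ^ #{u ∈ s | u < v})) = 0 := by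
    intro v hv
    rw [cone_singleSimp y (hface v hv), if_neg (fun h => hy (mem_of_mem_erase h)),
      erase_insert_of_ne (by rintro rfl; exact hy hv)]
    have hsign : (-1) ^ a * c * (-1) ^ #{u ∈ insert y s | u < v} =
        -((-1) ^ #{u ∈ s.erase v | u < y} * (c * (-1) ^ #{u ∈ s | u < v})) :=
      calc (-1) ^ a * c * (-1) ^ #{u ∈ insert y s | u < v}
          = c * (-1) ^ (#{u ∈ insert y s | u < v} + a) := by ring
        _ = c * (-1) ^ (#{u ∈ s | u < v} + #{u ∈ s.erase v | u < y} + 1) := by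
          rw [card_filter_lt_insert_add hy hv]
        _ = -((-1) ^ #{u ∈ s.erase v | u < y} * (c * (-1) ^ #{u ∈ s | u < v})) := by ring
    rw [hsign, singleSimp_neg_add_singleSimp]
  rw [cone_singleSimp y (by omega) c, if_neg hy,
    bdry_singleSimp (by rw [card_insert_of_notMem hy, hs]), sum_insert hy, erase_insert hy,
    filter_insert, if_neg (lt_irrefl y), bdry_singleSimp hs, cone_sum, add_assoc,
    ← sum_add_distrib, sum_eq_zero hfaces_cancel, add_zero, mul_comm _ c, mul_assoc, ← pow_add,
    Even.neg_one_pow ⟨_, rfl⟩, mul_one]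

theorem bdry_cone_add_cone_bdry (y : ℕ) (M : ZChain (n + 1)) :
    bdry (cone y M) + cone y (bdry M) = M := by
  induction M using Finsupp.induction_linear with
  | zero => simp [bdry, cone_zero]
  | add f g hf hg => rw [cone_add, bdry_add, bdry_add, cone_add, add_add_add_comm, hf, hg]
  | single s c =>
    rw [← singleSimp_of_card s.2]
    by_cases hy : y ∈ (s : Finset ℕ)
    · rw [cone_singleSimp y s.2, if_pos hy, cone_bdry_singleSimp_of_mem s.2 hy]
      simp [bdry]
    · exact bdry_cone_add_cone_bdry_singleSimp_of_notMem s.2 hy c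

end Homotopy

section Norms

variable {n : ℕ}

lemma znorm_add_of_disjoint {A B : ZChain n} (h : Disjoint A.support B.support) :
    znorm (A + B) = znorm A + znorm B :=
  Finsupp.sum_add_index_of_disjoint h _

lemma zdeg_add_of_disjoint (y : ℕ) {A B : ZChain n} (h : Disjoint A.support B.support) :
    zdeg y (A + B) = zdeg y A + zdeg y B :=
  Finsupp.sum_add_index_of_disjoint h _

lemma znorm_single (s : Simp n) (c : ℤ) : znorm (Finsupp.single s c) = c.natAbs :=
  Finsupp.sum_single_index rfl

lemma zdeg_single (y : ℕ) (s : Simp n) (c : ℤ) :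
    zdeg y (Finsupp.single s c) = if y ∈ (s : Finset ℕ) then c.natAbs else 0 :=
  Finsupp.sum_single_index (by simp)

lemma exists_of_mem_support_cone {x : ℕ} {M : ZChain n} {t : Simp (n + 1)}
    (ht : t ∈ (cone x M).support) :
    ∃ s ∈ M.support, x ∉ (s : Finset ℕ) ∧ (t : Finset ℕ) = insert x (s : Finset ℕ) := by
  obtain ⟨s, hs, hts⟩ := mem_biUnion.mp (Finsupp.support_sum ht)
  refine ⟨s, hs, ?_⟩
  split_ifs at hts with hx
  · simp at hts
  · obtain rfl := mem_singleton.mp (Finsupp.support_single_subset (Finsupp.support_smul hts))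
    exact ⟨hx, rfl⟩

/-- Coning is injective on simplices avoiding the apex. -/
lemma disjoint_support_cone {y : ℕ} {A B : ZChain n} (h : Disjoint A.support B.support) :
    Disjoint (cone y A).support (cone y B).support := by
  refine disjoint_left.mpr fun t htA htB => ?_
  obtain ⟨a, ha, hya, hta⟩ := exists_of_mem_support_cone htA
  obtain ⟨b, hb, hyb, htb⟩ := exists_of_mem_support_cone htB
  have hab : a = b := Subtype.ext <| by
    rw [← erase_insert hya, ← erase_insert hyb, ← hta, ← htb]
  exact disjoint_left.mp h ha (hab ▸ hb)

lemma znorm_cone_single_add_zdeg_single (y : ℕ) (s : Simp n) (c : ℤ) :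
    znorm (cone y (Finsupp.single s c)) + zdeg y (Finsupp.single s c) = c.natAbs := by
  rw [← singleSimp_of_card s.2, cone_singleSimp y s.2, singleSimp_of_card s.2, zdeg_single]
  split_ifs with hy
  · simp [znorm]
  · rw [singleSimp_of_card (by rw [card_insert_of_notMem hy, s.2]), znorm_single, add_zero,
      Int.natAbs_mul, Int.natAbs_pow, Int.natAbs_neg, Int.natAbs_one, one_pow, one_mul]

theorem znorm_cone_add_zdeg (y : ℕ) (M : ZChain n) : znorm (cone y M) + zdeg y M = znorm M := by
  induction M using Finsupp.induction with
  | zero => simp [cone_zero, znorm, zdeg]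
  | single_add s c f hsf _ ih =>
    have hdisj : Disjoint (Finsupp.single s c).support f.support :=
      disjoint_of_subset_left Finsupp.support_single_subset (disjoint_singleton_left.mpr hsf)
    rw [cone_add, znorm_add_of_disjoint (disjoint_support_cone hdisj),
      zdeg_add_of_disjoint y hdisj, znorm_add_of_disjoint hdisj, znorm_single,
      ← znorm_cone_single_add_zdeg_single y s c, ← ih]
    ring

lemma zdeg_eq_zero_of_notMem_vert {x : ℕ} {M : ZChain n} (hx : x ∉ vert M) : zdeg x M = 0 :=
  sum_eq_zero fun s hs => if_neg fun hxs => hx (mem_sup.mpr ⟨s, hs, hxs⟩)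

lemma zdeg_pos_of_mem_support {y : ℕ} {M : ZChain n} {s : Simp n} (hs : s ∈ M.support)
    (hy : y ∈ (s : Finset ℕ)) : 0 < zdeg y M := by
  calc 0 < (M s).natAbs := Int.natAbs_pos.mpr (Finsupp.mem_support_iff.mp hs)
    _ = if y ∈ (s : Finset ℕ) then (M s).natAbs else 0 := (if_pos hy).symm
    _ ≤ zdeg y M :=
      single_le_sum (f := fun t : Simp n => if y ∈ (t : Finset ℕ) then (M t).natAbs else 0)
        (fun _ _ => Nat.zero_le _) hs

end Norms

lemma zvol_le_znorm {n : ℕ} {X : ZChain n} (M : ZChain (n + 1)) (hM : bdry M = X) :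
    zvol X ≤ znorm M :=
  Nat.sInf_le ⟨M, hM, rfl⟩

/-- a nontrivial complete cone is not taut. -/
theorem complete_cone_not_taut {n : ℕ} (x : ℕ) (U : ZChain (n + 1))
    (hU : bdry U = 0) (hne : U ≠ 0) (hx : x ∉ vert U) :
    zvol U < znorm (cone x U) := by
  obtain ⟨s, hs⟩ := Finsupp.support_nonempty_iff.mpr hne
  obtain ⟨y, hy⟩ : (s : Finset ℕ).Nonempty := card_pos.mp (by rw [s.2]; omega)
  have hfill : bdry (cone y U) = U := by
    simpa [hU, cone_zero] using bdry_cone_add_cone_bdry y U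
  calc zvol U ≤ znorm (cone y U) := zvol_le_znorm _ hfill
    _ < znorm (cone y U) + zdeg y U := Nat.lt_add_of_pos_right (zdeg_pos_of_mem_support hs hy)
    _ = znorm U := znorm_cone_add_zdeg y U
    _ = znorm (cone x U) := by
      rw [← znorm_cone_add_zdeg x U, zdeg_eq_zero_of_notMem_vert hx, add_zero]
end

section
/- A taut integral (n+1)-chain M has no internal vertices: Vert(M) = Vert(∂M). Equivalently, if x ∈ Vert(M) but x ∉ Vert(∂M), then M is not taut. -/
/-!
If `x` is a vertex of `M` but not of `∂M`, write `M = x * L + P` with `L` the link of `x` and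
`P` the simplices avoiding `x`. Comparing the simplices through `x` in `∂M = ∂(x * L) + ∂P` shows
that `L` is a cycle (for `0`-chains: has augmentation `0`), so `∂(y * L) = L = ∂(x * L)` for
every vertex `y`. Taking `y` a vertex of `L` gives the filling `y * L + P` of `∂M`, strictly
smaller than `M` because the simplices of `L` through `y` disappear from the cone.
-/

namespace TautChain

open Finset

variable {n : ℕ}

section

variable {R : Type} [CommRing R]

lemma mem_vert_iff {x : ℕ} {V : GChain R n} :
    x ∈ vert V ↔ ∃ s ∈ V.support, x ∈ (s : Finset ℕ) := by
  simp [vert, mem_sup]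

lemma notMem_vert_iff {x : ℕ} {V : GChain R n} :
    x ∉ vert V ↔ ∀ w : Simp n, x ∈ (w : Finset ℕ) → V w = 0 := by
  simp only [mem_vert_iff, Finsupp.mem_support_iff]
  grind

lemma vert_nonempty {V : GChain R n} (hV : V ≠ 0) : (vert V).Nonempty := by
  obtain ⟨s, hs⟩ := Finsupp.support_nonempty_iff.mpr hV
  obtain ⟨y, hy⟩ := Finset.card_pos.mp (by rw [s.2]; omega)
  exact ⟨y, mem_vert_iff.mpr ⟨s, hs, hy⟩⟩

lemma notMem_vert_sub {x : ℕ} {V W : GChain R n} (hV : x ∉ vert V) (hW : x ∉ vert W) :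
    x ∉ vert (V - W) := by
  rw [notMem_vert_iff] at *
  intro w hw
  rw [Finsupp.sub_apply, hV w hw, hW w hw, sub_zero]

lemma notMem_vert_filter_notMem (x : ℕ) (M : GChain R n) :
    x ∉ vert (M.filter fun s : Simp n => x ∉ (s : Finset ℕ)) :=
  notMem_vert_iff.mpr fun _ hw => Finsupp.filter_apply_neg _ _ (not_not.mpr hw)

lemma linearCombination_apply_eq_zero {m : ℕ} {f : Simp m → GChain R n} {V : GChain R m}
    {w : Simp n} (h : ∀ s ∈ V.support, f s w = 0) : Finsupp.linearCombination R f V w = 0 := by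
  rw [Finsupp.linearCombination_apply, Finsupp.sum_apply]
  exact sum_eq_zero fun s hs => by simp [h s hs]

lemma bdry_eq_linearCombination (M : GChain R (n + 1)) :
    bdry M = Finsupp.linearCombination R (simpBdry R) M := rfl

lemma vert_bdry_subset (M : GChain R (n + 1)) : vert (bdry M) ⊆ vert M := by
  intro x
  contrapose
  simp only [notMem_vert_iff]
  intro hM w hw
  refine linearCombination_apply_eq_zero fun s hs => ?_
  have hxs : x ∉ (s : Finset ℕ) := fun hxs => Finsupp.mem_support_iff.mp hs (hM s hxs)
  rw [simpBdry, Finsupp.finsetSum_apply]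
  refine sum_eq_zero fun v _ => ?_
  rw [Finsupp.smul_apply, Finsupp.single_apply, if_neg, smul_zero]
  exact fun h => hxs (mem_of_mem_erase (congrArg Subtype.val h ▸ hw))

end

/-- The sign of moving `x` into its sorted position in `t`. -/
def belowSign (t : Finset ℕ) (x : ℕ) : ℤ := (-1) ^ #(t.filter (· < x))

lemma belowSign_mul_self (t : Finset ℕ) (x : ℕ) : belowSign t x * belowSign t x = 1 := by
  rw [belowSign, ← pow_add]
  exact Even.neg_one_pow ⟨_, rfl⟩

lemma natAbs_belowSign (t : Finset ℕ) (x : ℕ) : (belowSign t x).natAbs = 1 := by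
  simp [belowSign]

lemma belowSign_erase_self (t : Finset ℕ) (x : ℕ) :
    belowSign (t.erase x) x = belowSign t x := by
  rw [belowSign, filter_erase, erase_eq_of_notMem (by simp), belowSign]

lemma belowSign_insert_self (t : Finset ℕ) (x : ℕ) :
    belowSign (insert x t) x = belowSign t x := by
  rw [belowSign, filter_insert, if_neg (lt_irrefl x), belowSign]

lemma belowSign_mul_belowSign_insert {t : Finset ℕ} {x v : ℕ} (hv : v ∈ t) (hx : x ∉ t) :
    belowSign t x * belowSign (insert x t) v = -(belowSign t v * belowSign (t.erase v) x) := by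
  have hxv : x ≠ v := fun h => hx (h ▸ hv)
  unfold belowSign
  rcases hxv.lt_or_gt with h | h
  · have hxt : x ∉ t.filter (· < v) := fun h' => hx (mem_filter.mp h').1
    have hvt : v ∉ t.filter (· < x) := fun h' => by have := (mem_filter.mp h').2; omega
    rw [filter_insert, if_pos h, card_insert_of_notMem hxt, filter_erase,
      erase_eq_of_notMem hvt, pow_succ]
    ring
  · rw [filter_insert, if_neg (by omega), filter_erase,
      ← card_erase_add_one (mem_filter.mpr ⟨hv, h⟩), pow_succ]
    ring

/-- The elementary chain of the simplex with vertex set `t`, or `0` if `t` has the wrong size. -/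
noncomputable def basisChain (n : ℕ) (t : Finset ℕ) : ZChain n :=
  if h : #t = n + 1 then Finsupp.single ⟨t, h⟩ 1 else 0

lemma basisChain_coe (s : Simp n) : basisChain n s = Finsupp.single s 1 := by
  rw [basisChain, dif_pos s.2]

lemma single_eq_zsmul_basisChain (s : Simp n) (c : ℤ) :
    Finsupp.single s c = c • basisChain n s := by
  rw [basisChain_coe, Finsupp.smul_single_one]

lemma basisChain_of_card_ne {t : Finset ℕ} (h : #t ≠ n + 1) : basisChain n t = 0 := by
  rw [basisChain, dif_neg h]

lemma basisChain_apply (t : Finset ℕ) (w : Simp n) :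
    basisChain n t w = if (w : Finset ℕ) = t then 1 else 0 := by
  by_cases ht : #t = n + 1
  · rw [basisChain, dif_pos ht, Finsupp.single_apply]
    exact if_congr ⟨fun h => by rw [← h], fun h => Subtype.ext h.symm⟩ rfl rfl
  · rw [basisChain_of_card_ne ht, if_neg (fun h : (w : Finset ℕ) = t => ht (h ▸ w.2))]
    rfl

lemma znorm_eq_sum_of_support_subset (M : ZChain n) {t : Finset (Simp n)}
    (h : M.support ⊆ t) : znorm M = ∑ s ∈ t, (M s).natAbs :=
  Finset.sum_subset h fun s _ hs => by simp [Finsupp.notMem_support_iff.mp hs]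

lemma znorm_add_le (M N : ZChain n) : znorm (M + N) ≤ znorm M + znorm N := by
  classical
  rw [znorm_eq_sum_of_support_subset (M + N) Finsupp.support_add,
    znorm_eq_sum_of_support_subset M subset_union_left,
    znorm_eq_sum_of_support_subset N subset_union_right, ← sum_add_distrib]
  exact sum_le_sum fun s _ => Int.natAbs_add_le _ _

lemma znorm_zsmul (c : ℤ) (M : ZChain n) : znorm (c • M) = c.natAbs * znorm M := by
  rw [znorm_eq_sum_of_support_subset (c • M) Finsupp.support_smul, znorm, Finsupp.sum, mul_sum]
  simp [Int.natAbs_mul]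

lemma znorm_sum_le {ι : Type} (t : Finset ι) (f : ι → ZChain n) :
    znorm (∑ i ∈ t, f i) ≤ ∑ i ∈ t, znorm (f i) :=
  le_sum_of_subadditive znorm le_rfl znorm_add_le t f

lemma znorm_linearCombination_le {m : ℕ} (f : Simp m → ZChain n) (V : ZChain m) :
    znorm (Finsupp.linearCombination ℤ f V) ≤
      ∑ s ∈ V.support, (V s).natAbs * znorm (f s) := by
  rw [Finsupp.linearCombination_apply, Finsupp.sum]
  exact (znorm_sum_le _ _).trans_eq (sum_congr rfl fun s _ => znorm_zsmul _ _)

lemma znorm_filter_add_znorm_filter_not (p : Simp n → Prop) [DecidablePred p]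
    (M : ZChain n) : znorm (M.filter p) + znorm (M.filter (¬p ·)) = znorm M :=
  Finsupp.sum_filter_add_sum_filter_not p M _

lemma znorm_belowSign_smul (t : Finset ℕ) (x : ℕ) (V : ZChain n) :
    znorm (belowSign t x • V) = znorm V := by
  rw [znorm_zsmul, natAbs_belowSign, one_mul]

lemma znorm_basisChain_le (t : Finset ℕ) : znorm (basisChain n t) ≤ 1 := by
  rw [basisChain]
  split
  · exact (Finsupp.sum_single_index rfl).le
  · exact zero_le_one

lemma simpBdry_eq_sum (s : Simp (n + 1)) :
    simpBdry ℤ s =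
      ∑ v ∈ (s : Finset ℕ), belowSign s v • basisChain n ((s : Finset ℕ).erase v) := by
  rw [simpBdry, ← sum_attach (s : Finset ℕ)]
  refine sum_congr rfl fun v _ => ?_
  rw [basisChain, dif_pos (by rw [card_erase_of_mem v.2, s.2]; rfl)]
  rfl

lemma bdry_basisChain {t : Finset ℕ} (ht : #t = n + 2) :
    bdry (basisChain (n + 1) t) = ∑ v ∈ t, belowSign t v • basisChain n (t.erase v) := by
  rw [basisChain, dif_pos ht, bdry_eq_linearCombination, Finsupp.linearCombination_single,
    one_smul, simpBdry_eq_sum]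

lemma bdry_add (M N : ZChain (n + 1)) : bdry (M + N) = bdry M + bdry N := by
  simp only [bdry_eq_linearCombination, map_add]

lemma bdry_zsmul (c : ℤ) (M : ZChain (n + 1)) : bdry (c • M) = c • bdry M := by
  simp only [bdry_eq_linearCombination, map_zsmul]

lemma bdry_zero : bdry (0 : ZChain (n + 1)) = 0 := by
  simp only [bdry_eq_linearCombination, map_zero]

lemma cone_eq_linearCombination (x : ℕ) (V : ZChain n) :
    cone x V = Finsupp.linearCombination ℤ
      (fun s : Simp n => belowSign s x • basisChain (n + 1) (insert x (s : Finset ℕ))) V := by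
  rw [cone, Finsupp.linearCombination_apply]
  refine Finsupp.sum_congr fun s _ => ?_
  split_ifs with hx
  · rw [basisChain_of_card_ne (by rw [insert_eq_of_mem hx, s.2]; omega), smul_zero, smul_zero]
  · rw [basisChain, dif_pos, smul_smul, mul_comm]
    rfl

lemma cone_add (x : ℕ) (V W : ZChain n) : cone x (V + W) = cone x V + cone x W := by
  simp only [cone_eq_linearCombination, map_add]

lemma cone_zsmul (x : ℕ) (c : ℤ) (V : ZChain n) : cone x (c • V) = c • cone x V := by
  simp only [cone_eq_linearCombination, map_zsmul]

lemma cone_zero (x : ℕ) : cone x (0 : ZChain n) = 0 := by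
  simp only [cone_eq_linearCombination, map_zero]

lemma cone_sum (x : ℕ) {ι : Type} (t : Finset ι) (f : ι → ZChain n) :
    cone x (∑ i ∈ t, f i) = ∑ i ∈ t, cone x (f i) := by
  simp only [cone_eq_linearCombination, map_sum]

/-- The link of `x` in `M`, with the orientation for which `cone x (link x M)` is the part of `M`
near `x`. Simplices of `M` avoiding `x` contribute `basisChain n s = 0`. -/
noncomputable def link (x : ℕ) (M : ZChain (n + 1)) : ZChain n :=
  Finsupp.linearCombination ℤ
    (fun s : Simp (n + 1) => belowSign s x • basisChain n ((s : Finset ℕ).erase x)) M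

lemma cone_basisChain (x : ℕ) {t : Finset ℕ} (ht : #t = n + 1) :
    cone x (basisChain n t) = belowSign t x • basisChain (n + 1) (insert x t) := by
  rw [basisChain, dif_pos ht, cone_eq_linearCombination, Finsupp.linearCombination_single,
    one_smul]

lemma cone_basisChain_of_mem {x : ℕ} {t : Finset ℕ} (hx : x ∈ t) :
    cone x (basisChain n t) = 0 := by
  by_cases ht : #t = n + 1
  · rw [cone_basisChain x ht, insert_eq_of_mem hx,
      basisChain_of_card_ne (by omega), smul_zero]
  · rw [basisChain_of_card_ne ht, cone_zero]

lemma link_basisChain (x : ℕ) {t : Finset ℕ} (ht : #t = n + 2) :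
    link x (basisChain (n + 1) t) = belowSign t x • basisChain n (t.erase x) := by
  rw [basisChain, dif_pos ht, link, Finsupp.linearCombination_single, one_smul]

lemma cone_apply_of_notMem {x : ℕ} (V : ZChain n) {w : Simp (n + 1)}
    (hw : x ∉ (w : Finset ℕ)) : cone x V w = 0 := by
  rw [cone_eq_linearCombination]
  refine linearCombination_apply_eq_zero fun s _ => ?_
  rw [Finsupp.smul_apply, basisChain_apply,
    if_neg (fun h : (w : Finset ℕ) = _ => hw (h ▸ mem_insert_self x _)), smul_zero]

lemma link_apply_of_mem {x : ℕ} (M : ZChain (n + 1)) {w : Simp n}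
    (hw : x ∈ (w : Finset ℕ)) : link x M w = 0 := by
  rw [link]
  refine linearCombination_apply_eq_zero fun s _ => ?_
  rw [Finsupp.smul_apply, basisChain_apply, if_neg (fun h => notMem_erase x _ (h ▸ hw)),
    smul_zero]

lemma notMem_vert_link (x : ℕ) (M : ZChain (n + 1)) : x ∉ vert (link x M) :=
  notMem_vert_iff.mpr fun _ => link_apply_of_mem M

lemma cone_eq_zero_of_notMem_vert {x : ℕ} {V : ZChain n}
    (h : x ∉ vert (cone x V)) : cone x V = 0 := by
  ext w
  by_cases hw : x ∈ (w : Finset ℕ)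
  · exact notMem_vert_iff.mp h w hw
  · exact cone_apply_of_notMem V hw

lemma cone_link (x : ℕ) (M : ZChain (n + 1)) :
    cone x (link x M) = M.filter fun s : Simp (n + 1) => x ∈ (s : Finset ℕ) := by
  induction M using Finsupp.induction_linear with
  | zero => rw [link, map_zero, cone_zero, Finsupp.filter_zero]
  | add V W hV hW => rw [link, map_add, cone_add, ← link, ← link, hV, hW, Finsupp.filter_add]
  | single s c =>
    rw [link, Finsupp.linearCombination_single, cone_zsmul, cone_zsmul]
    by_cases hx : x ∈ (s : Finset ℕ)
    · rw [Finsupp.filter_single_of_pos (fun s : Simp (n + 1) => x ∈ (s : Finset ℕ)) hx,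
        cone_basisChain x (by rw [card_erase_of_mem hx, s.2]; rfl), insert_erase hx,
        belowSign_erase_self, smul_smul, smul_smul, mul_assoc, belowSign_mul_self, mul_one,
        single_eq_zsmul_basisChain]
    · rw [Finsupp.filter_single_of_neg (fun s : Simp (n + 1) => x ∈ (s : Finset ℕ)) hx,
        erase_eq_of_notMem hx,
        basisChain_of_card_ne (by rw [s.2]; omega), cone_zero, smul_zero, smul_zero]

lemma link_cone (x : ℕ) (V : ZChain n) :
    link x (cone x V) = V.filter fun s : Simp n => x ∉ (s : Finset ℕ) := by
  induction V using Finsupp.induction_linear with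
  | zero => rw [cone_zero, link, map_zero, Finsupp.filter_zero]
  | add V W hV hW => rw [cone_add, link, map_add, ← link, ← link, hV, hW, Finsupp.filter_add]
  | single s c =>
    conv_lhs => rw [single_eq_zsmul_basisChain, cone_zsmul, link, map_zsmul, ← link]
    by_cases hx : x ∈ (s : Finset ℕ)
    · rw [cone_basisChain_of_mem hx, link, map_zero, smul_zero,
        Finsupp.filter_single_of_neg (fun s : Simp n => x ∉ (s : Finset ℕ)) (not_not.mpr hx)]
    · rw [cone_basisChain x s.2, link, map_zsmul, ← link,
        link_basisChain x (by rw [card_insert_of_notMem hx, s.2]), erase_insert hx,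
        belowSign_insert_self, smul_smul, smul_smul, mul_assoc, belowSign_mul_self, mul_one,
        Finsupp.filter_single_of_pos (fun s : Simp n => x ∉ (s : Finset ℕ)) hx,
        single_eq_zsmul_basisChain]

lemma link_cone_of_notMem_vert {x : ℕ} {V : ZChain n} (hV : x ∉ vert V) :
    link x (cone x V) = V := by
  rw [link_cone]
  exact (Finsupp.filter_eq_self_iff _ V).mpr fun w hw hxw => hw (notMem_vert_iff.mp hV w hxw)

lemma znorm_link_le (x : ℕ) (M : ZChain (n + 1)) : znorm (link x M) ≤ znorm M := by
  refine (znorm_linearCombination_le _ M).trans (sum_le_sum fun s _ => ?_)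
  rw [znorm_belowSign_smul]
  exact mul_le_of_le_one_right (Nat.zero_le _) (znorm_basisChain_le _)

lemma znorm_cone_lt {y : ℕ} {V : ZChain n} (hy : y ∈ vert V) :
    znorm (cone y V) < znorm V := by
  obtain ⟨s₀, hs₀, hys₀⟩ := mem_vert_iff.mp hy
  rw [cone_eq_linearCombination]
  refine (znorm_linearCombination_le _ V).trans_lt
    (sum_lt_sum (fun s _ => ?_) ⟨s₀, hs₀, ?_⟩)
  · rw [znorm_belowSign_smul]
    exact mul_le_of_le_one_right (Nat.zero_le _) (znorm_basisChain_le _)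
  · rw [insert_eq_of_mem hys₀, basisChain_of_card_ne (by rw [s₀.2]; omega), smul_zero]
    show (V s₀).natAbs * 0 < (V s₀).natAbs
    rw [mul_zero]
    exact Int.natAbs_pos.mpr (Finsupp.mem_support_iff.mp hs₀)

lemma bdry_cone_basisChain {x : ℕ} (s : Simp n) (hx : x ∉ (s : Finset ℕ)) :
    bdry (cone x (basisChain n s)) = basisChain n s - ∑ v ∈ (s : Finset ℕ),
      (belowSign s v * belowSign ((s : Finset ℕ).erase v) x) •
        basisChain n (insert x ((s : Finset ℕ).erase v)) := by
  rw [cone_basisChain x s.2, bdry_zsmul, bdry_basisChain (by rw [card_insert_of_notMem hx, s.2]),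
    sum_insert hx, erase_insert hx, belowSign_insert_self, smul_add, smul_smul,
    belowSign_mul_self, one_smul, smul_sum, sub_eq_add_neg, ← sum_neg_distrib]
  refine congrArg _ (sum_congr rfl fun v hv => ?_)
  rw [erase_insert_of_ne (fun h : x = v => hx (h ▸ hv)), smul_smul,
    belowSign_mul_belowSign_insert hv hx, neg_smul]

lemma bdry_cone (x : ℕ) (U : ZChain (n + 1)) :
    bdry (cone x U) = U - cone x (bdry U) := by
  induction U using Finsupp.induction_linear with
  | zero => rw [cone_zero, bdry_zero, bdry_zero, cone_zero, sub_zero]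
  | add V W hV hW => rw [cone_add, bdry_add, hV, hW, bdry_add, cone_add]; abel
  | single s c =>
    rw [single_eq_zsmul_basisChain, cone_zsmul, bdry_zsmul, bdry_zsmul, cone_zsmul, ← smul_sub,
      bdry_basisChain s.2, cone_sum]
    congr 1
    by_cases hx : x ∈ (s : Finset ℕ)
    · rw [cone_basisChain_of_mem hx, bdry_zero, sum_eq_single_of_mem x hx, cone_zsmul,
        cone_basisChain x (by rw [card_erase_of_mem hx, s.2]; rfl), insert_erase hx,
        belowSign_erase_self, smul_smul, belowSign_mul_self, one_smul, sub_self]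
      intro v _ hvx
      rw [cone_zsmul, cone_basisChain_of_mem (mem_erase.mpr ⟨Ne.symm hvx, hx⟩), smul_zero]
    · rw [bdry_cone_basisChain s hx]
      refine congrArg _ (sum_congr rfl fun v hv => ?_)
      rw [cone_zsmul, cone_basisChain x (by rw [card_erase_of_mem hv, s.2]; rfl), smul_smul]

def augmentation (U : ZChain 0) : ℤ := U.sum fun _ c => c

lemma augmentation_add (U V : ZChain 0) : augmentation (U + V) = augmentation U + augmentation V :=
  Finsupp.sum_add_index' (fun _ => rfl) (fun _ _ _ => rfl)

lemma bdry_cone_dim_zero (x : ℕ) (U : ZChain 0) :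
    bdry (cone x U) = U - augmentation U • basisChain 0 {x} := by
  induction U using Finsupp.induction_linear with
  | zero => rw [cone_zero, bdry_zero, augmentation, Finsupp.sum_zero_index, zero_smul, sub_zero]
  | add V W hV hW =>
    rw [cone_add, bdry_add, hV, hW, augmentation_add, add_smul]
    abel
  | single s c =>
    rw [augmentation, Finsupp.sum_single_index rfl, single_eq_zsmul_basisChain, cone_zsmul,
      bdry_zsmul, ← smul_sub]
    congr 1
    obtain ⟨v, hv⟩ := card_eq_one.mp s.2
    by_cases hxv : x = v
    · rw [cone_basisChain_of_mem (by rw [hv, hxv]; exact mem_singleton_self v), bdry_zero, hv, hxv,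
        sub_self]
    · rw [bdry_cone_basisChain s (by rw [hv]; exact notMem_singleton.mpr hxv), hv]
      simp [belowSign, filter_singleton]

lemma bdry_eq_zero_of_notMem_vert {x : ℕ} {U : ZChain (n + 1)} (hU : x ∉ vert U)
    (h : x ∉ vert (bdry (cone x U))) : bdry U = 0 := by
  have hcone : cone x (bdry U) = 0 := by
    refine cone_eq_zero_of_notMem_vert ?_
    rw [show cone x (bdry U) = U - bdry (cone x U) by rw [bdry_cone]; abel]
    exact notMem_vert_sub hU h
  rw [← link_cone_of_notMem_vert (fun h' => hU (vert_bdry_subset U h')), hcone, link, map_zero]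

lemma augmentation_eq_zero_of_notMem_vert {x : ℕ} {U : ZChain 0} (hU : x ∉ vert U)
    (h : x ∉ vert (bdry (cone x U))) : augmentation U = 0 := by
  let w : Simp 0 := ⟨{x}, card_singleton x⟩
  have hw := notMem_vert_iff.mp h w (mem_singleton_self x)
  rw [bdry_cone_dim_zero, Finsupp.sub_apply, notMem_vert_iff.mp hU w (mem_singleton_self x),
    Finsupp.smul_apply, basisChain_apply, if_pos rfl] at hw
  simpa using hw

/-- A cone whose boundary avoids its apex is a cone over a cycle, so its base is also filled by
the cone from any other apex. -/
lemma bdry_cone_eq_self {x : ℕ} {U : ZChain n} (hU : x ∉ vert U)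
    (h : x ∉ vert (bdry (cone x U))) (y : ℕ) : bdry (cone y U) = U := by
  cases n with
  | zero => rw [bdry_cone_dim_zero, augmentation_eq_zero_of_notMem_vert hU h, zero_smul, sub_zero]
  | succ n => rw [bdry_cone, bdry_eq_zero_of_notMem_vert hU h, cone_zero, sub_zero]

lemma exists_bdry_eq_znorm_lt {x : ℕ} {M : ZChain (n + 1)} (hxM : x ∈ vert M)
    (hx : x ∉ vert (bdry M)) : ∃ N : ZChain (n + 1), bdry N = bdry M ∧ znorm N < znorm M := by
  set U := link x M
  set P := M.filter fun s : Simp (n + 1) => x ∉ (s : Finset ℕ)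
  have hM : cone x U + P = M := by rw [cone_link]; exact Finsupp.filter_add_filter_not _ _
  have hxU : x ∉ vert U := notMem_vert_link x M
  have hbdry : x ∉ vert (bdry (cone x U)) := by
    rw [show bdry (cone x U) = bdry M - bdry P by rw [← hM, bdry_add]; abel]
    exact notMem_vert_sub hx fun h => notMem_vert_filter_notMem x M (vert_bdry_subset P h)
  have hU : U ≠ 0 := by
    intro hU
    obtain ⟨s, hs, hxs⟩ := mem_vert_iff.mp hxM
    have hstar : cone x U = _ := cone_link x M
    rw [hU, cone_zero] at hstar
    exact Finsupp.mem_support_iff.mp hs ((Finsupp.filter_eq_zero_iff _ M).mp hstar.symm s hxs)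
  obtain ⟨y, hy⟩ := vert_nonempty hU
  refine ⟨cone y U + P, ?_, ?_⟩
  · rw [bdry_add, bdry_cone_eq_self hxU hbdry y, ← bdry_cone_eq_self hxU hbdry x, ← bdry_add,
      hM]
  · calc znorm (cone y U + P) ≤ znorm (cone y U) + znorm P := znorm_add_le _ _
      _ < znorm U + znorm P := Nat.add_lt_add_right (znorm_cone_lt hy) _
      _ ≤ znorm (cone x U) + znorm P := by
        gcongr
        conv_lhs => rw [← link_cone_of_notMem_vert hxU]
        exact znorm_link_le x _
      _ = znorm M := by rw [cone_link, znorm_filter_add_znorm_filter_not]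

lemma zvol_bdry_le (N : ZChain (n + 1)) : zvol (bdry N) ≤ znorm N :=
  Nat.sInf_le ⟨N, rfl, rfl⟩

end TautChain

/-- a taut chain has no internal vertices. -/
theorem vert_of_taut {n : ℕ} (M : ZChain (n + 1)) (hM : Taut M) :
    vert M = vert (bdry M) := by
  refine Finset.Subset.antisymm (fun x hxM => ?_) (TautChain.vert_bdry_subset M)
  by_contra hx
  obtain ⟨N, hN, hlt⟩ := TautChain.exists_bdry_eq_znorm_lt hxM hx
  have hvol := TautChain.zvol_bdry_le N
  rw [hN, ← hM] at hvol
  exact hlt.not_ge hvol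
end

section
/- Let A, B be finite vertex sets with |A ∩ B| ≤ n. Then the map (X,Y) ↦ X + Y from C_n(A) ⊕ C_n(B) to C_n(A ∪ B) is injective; that is, X and Y are uniquely recoverable from X + Y. -/
/- The difference `X - X' = Y' - Y` is supported both on `A` and on `B`, hence on `A ∩ B`;
but an `n`-simplex has `n + 1` vertices, so no simplex fits in `A ∩ B` and the difference
vanishes. -/

section SuppOn

variable {R : Type} [CommRing R] {n : ℕ}

theorem suppOn_sub {A : Finset ℕ} {M N : GChain R n} (hM : suppOn A M) (hN : suppOn A N) :
    suppOn A (M - N) := fun s hs =>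
  (Finset.mem_union.mp (Finsupp.support_sub hs)).elim (hM s) (hN s)

theorem suppOn_inter {A B : Finset ℕ} {M : GChain R n} (hA : suppOn A M) (hB : suppOn B M) :
    suppOn (A ∩ B) M := fun s hs => Finset.subset_inter (hA s hs) (hB s hs)

theorem eq_zero_of_suppOn_of_card_le {A : Finset ℕ} {M : GChain R n} (hA : A.card ≤ n)
    (hM : suppOn A M) : M = 0 := by
  rw [← Finsupp.support_eq_empty, Finset.eq_empty_iff_forall_notMem]
  intro s hs
  have := Finset.card_le_card (hM s hs)
  rw [s.2] at this
  omega

end SuppOn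

/-- if `|A ∩ B| ≤ n`, an `n`-chain supported on `A` plus an
`n`-chain supported on `B` determines the two summands. -/
theorem recover_chains {n : ℕ} (A B : Finset ℕ) (h : (A ∩ B).card ≤ n)
    (X X' : ZChain n) (Y Y' : ZChain n)
    (hX : suppOn A X) (hX' : suppOn A X') (hY : suppOn B Y) (hY' : suppOn B Y')
    (hsum : X + Y = X' + Y') : X = X' ∧ Y = Y' := by
  have hD : X - X' = Y' - Y := by
    rw [sub_eq_sub_iff_add_eq_add, hsum, add_comm]
  have hB : suppOn B (X - X') := hD ▸ suppOn_sub hY' hY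
  have hzero : X - X' = 0 :=
    eq_zero_of_suppOn_of_card_le h (suppOn_inter (suppOn_sub hX hX') hB)
  exact ⟨sub_eq_zero.mp hzero, (sub_eq_zero.mp (hD ▸ hzero)).symm⟩
end

section
/- Taut fillings split under almost disjoint union when n ≥ 2: if X ∈ Z_n(A), Y ∈ Z_n(B) with |A ∩ B| ≤ n + 1 and n ≥ 2, then every taut integral (n+1)-chain M with ∂M = X + Y decomposes as M = M_X + M_Y with ∂M_X = X, ∂M_Y = Y, |M| = |M_X| + |M_Y|, and M_X, M_Y taut. -/
/-!
For centres `p ∈ A` and `q ∈ B`, the projection `K(A, p)` is the chain map induced by the vertex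
map that fixes `A` and sends every other vertex to `p`. It fixes `X` and maps the cycle `Y` to a
cycle on the at most `n + 2` vertices of `insert p (A ∩ B)`, that is to `0`; so
`K(A, p) M + K(B, q) M` is another filling of `X + Y`. When `p` and `q` are distinct points of
`A ∩ B`, no simplex survives both projections, so this filling is no longer than `M`, and it is
strictly shorter if some simplex of `M` is killed by both. Tautness therefore forces every simplex
of `M` to be near `A` or near `B`: all its vertices but at most one lie in that set, and if one
does not, the simplex avoids `A ∩ B`. Let `M_X` be the part of `M` near `A`. The defect
`∂M_X - X = Y - ∂M_Y` is then a cycle on faces near both sets, i.e. inside `A ∩ B`, so it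
vanishes, and the additivity of the norm makes both parts taut.
-/

open Finset

namespace SimplicialChain

/-- The sign `(-1)^i` of the face of `T` opposite to its `i`-th vertex `v`. -/
def posSign (v : ℕ) (T : Finset ℕ) : ℤ := (-1) ^ #{x ∈ T | x < v}

lemma posSign_mul_self (v : ℕ) (T : Finset ℕ) : posSign v T * posSign v T = 1 := by
  rw [posSign, ← pow_add, ← two_mul, pow_mul]; norm_num

lemma natAbs_posSign (v : ℕ) (T : Finset ℕ) : (posSign v T).natAbs = 1 := by
  simp [posSign]

lemma posSign_eq_mul_erase {w : ℕ} {T : Finset ℕ} (hw : w ∈ T) (v : ℕ) :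
    posSign v T = (if w < v then -1 else 1) * posSign v (T.erase w) := by
  rw [posSign, posSign, filter_erase]
  split_ifs with h
  · rw [← card_erase_add_one (mem_filter.2 ⟨hw, h⟩), pow_succ]; ring
  · rw [erase_eq_of_notMem (by simp [h]), one_mul]

lemma posSign_erase_self (v : ℕ) (T : Finset ℕ) : posSign v (T.erase v) = posSign v T := by
  by_cases hv : v ∈ T
  · simp [posSign_eq_mul_erase hv v]
  · rw [erase_eq_of_notMem hv]

lemma posSign_insert_self (v : ℕ) (T : Finset ℕ) : posSign v (insert v T) = posSign v T := by
  rw [← posSign_erase_self, erase_insert_eq_erase, posSign_erase_self]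

lemma posSign_mul_posSign_erase {v w : ℕ} {T : Finset ℕ} (hv : v ∈ T) (hw : w ∈ T)
    (hvw : v ≠ w) :
    posSign v T * posSign w (T.erase v) = -(posSign w T * posSign v (T.erase w)) := by
  rw [posSign_eq_mul_erase hw v, posSign_eq_mul_erase hv w]
  rcases hvw.lt_or_gt with h | h <;> simp [h, h.not_gt] <;> ring

/-- The simplex with vertex set `T` as a chain, and `0` when `T` has the wrong size, so that
simplices can be handled as plain finsets. -/
noncomputable def spx (k : ℕ) (T : Finset ℕ) : ZChain k :=
  if h : #T = k + 1 then Finsupp.single ⟨T, h⟩ 1 else 0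

lemma spx_coe {k : ℕ} (s : Simp k) : spx k s = Finsupp.single s 1 := by
  rw [spx, dif_pos s.2]

lemma spx_of_card_ne {k : ℕ} {T : Finset ℕ} (h : #T ≠ k + 1) : spx k T = 0 := dif_neg h

lemma spx_apply {k : ℕ} (T : Finset ℕ) (u : Simp k) :
    spx k T u = if T = (u : Finset ℕ) then 1 else 0 := by
  unfold spx
  split_ifs with h₁ h₂ h₂
  · rw [Finsupp.single_apply, if_pos (Subtype.ext h₂)]
  · rw [Finsupp.single_apply, if_neg fun h => h₂ (congrArg Subtype.val h)]
  · exact absurd (h₂ ▸ u.2) h₁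
  · rfl

lemma spx_mem_supported {k : ℕ} {P : Finset ℕ → Prop} {T : Finset ℕ} (hT : P T) :
    spx k T ∈ Finsupp.supported ℤ ℤ {s : Simp k | P s} := by
  unfold spx
  split_ifs
  · exact Finsupp.single_mem_supported ℤ _ hT
  · exact zero_mem _

lemma suppOn_iff_mem_supported {k : ℕ} {S : Finset ℕ} {M : ZChain k} :
    suppOn S M ↔ M ∈ Finsupp.supported ℤ ℤ {s : Simp k | (s : Finset ℕ) ⊆ S} := by
  rw [Finsupp.mem_supported]; rfl

lemma bdry_eq_linearCombination {k : ℕ} (M : ZChain (k + 1)) :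
    bdry M = Finsupp.linearCombination ℤ (simpBdry ℤ) M :=
  (Finsupp.linearCombination_apply ℤ M).symm

lemma bdry_add {k : ℕ} (M N : ZChain (k + 1)) : bdry (M + N) = bdry M + bdry N := by
  simp only [bdry_eq_linearCombination, map_add]

lemma bdry_sub {k : ℕ} (M N : ZChain (k + 1)) : bdry (M - N) = bdry M - bdry N := by
  simp only [bdry_eq_linearCombination, map_sub]

lemma bdry_smul {k : ℕ} (c : ℤ) (M : ZChain (k + 1)) : bdry (c • M) = c • bdry M := by
  simp only [bdry_eq_linearCombination, map_smul]

lemma bdry_zero {k : ℕ} : bdry (0 : ZChain (k + 1)) = 0 := by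
  simp only [bdry_eq_linearCombination, map_zero]

lemma bdry_sum {k : ℕ} {ι : Type*} (I : Finset ι) (F : ι → ZChain (k + 1)) :
    bdry (∑ i ∈ I, F i) = ∑ i ∈ I, bdry (F i) := by
  simp only [bdry_eq_linearCombination, map_sum]

lemma simpBdry_eq {k : ℕ} (s : Simp (k + 1)) :
    simpBdry ℤ s =
      ∑ v ∈ (s : Finset ℕ), posSign v s • spx k ((s : Finset ℕ).erase v) := by
  rw [simpBdry,
    ← sum_attach (s : Finset ℕ) fun v => posSign v s • spx k ((s : Finset ℕ).erase v)]
  refine sum_congr rfl fun v _ => ?_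
  rw [posSign, spx, dif_pos]

lemma bdry_spx (k : ℕ) (T : Finset ℕ) :
    bdry (spx (k + 1) T) = ∑ v ∈ T, posSign v T • spx k (T.erase v) := by
  by_cases hT : #T = k + 2
  · rw [spx, dif_pos hT, bdry, Finsupp.sum_single_index (by simp), one_smul, simpBdry_eq]
  · rw [spx_of_card_ne hT, bdry_zero]
    refine (sum_eq_zero fun v hv => ?_).symm
    rw [spx_of_card_ne (by rw [card_erase_of_mem hv]; omega), smul_zero]

lemma bdry_bdry_spx (k : ℕ) (T : Finset ℕ) : bdry (bdry (spx (k + 2) T)) = 0 := by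
  classical
  simp only [bdry_spx, bdry_sum, bdry_smul, smul_sum, smul_smul]
  have hoff : ∀ (v : ℕ) (g : ℕ → ZChain k),
      ∑ w ∈ T.erase v, g w = ∑ w ∈ T, if w ≠ v then g w else 0 := fun v g => by
    rw [← sum_filter, filter_ne']
  simp only [hoff]
  -- the terms for `(v, w)` and `(w, v)` cancel
  rw [← sum_product' (f := fun v w => if w ≠ v then
    (posSign v T * posSign w (T.erase v)) • spx k ((T.erase v).erase w) else 0)]
  refine sum_involution (fun x _ => x.swap) (fun ⟨v, w⟩ h => ?_) (fun ⟨v, w⟩ _ h => ?_)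
    (fun x h => mem_product.2 ⟨(mem_product.1 h).2, (mem_product.1 h).1⟩) (fun _ _ => rfl)
  · obtain ⟨hv, hw⟩ := mem_product.1 h
    by_cases hvw : w = v
    · simp [hvw]
    · simp only [Prod.swap, if_pos hvw, if_pos (Ne.symm hvw), erase_right_comm (a := v),
        posSign_mul_posSign_erase hv hw (Ne.symm hvw), neg_smul, neg_add_cancel]
  · intro hc
    simp only [Prod.swap_prod_mk, Prod.mk.injEq] at hc
    simp [hc.1] at h

lemma single_eq_smul_spx {k : ℕ} (s : Simp k) (c : ℤ) :
    Finsupp.single s c = c • spx k s := by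
  rw [spx_coe, Finsupp.smul_single, smul_eq_mul, mul_one]

lemma bdry_bdry {k : ℕ} (M : ZChain (k + 2)) : bdry (bdry M) = 0 := by
  induction M using Finsupp.induction_linear with
  | zero => rw [bdry_zero, bdry_zero]
  | add M N hM hN => rw [bdry_add, bdry_add, hM, hN, add_zero]
  | single s c => rw [single_eq_smul_spx, bdry_smul, bdry_smul, bdry_bdry_spx, smul_zero]

lemma bdry_spx_apply_erase {k : ℕ} {T : Finset ℕ} {v : ℕ} (hv : v ∈ T) (u : Simp k)
    (hu : (u : Finset ℕ) = T.erase v) : bdry (spx (k + 1) T) u = posSign v T := by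
  rw [bdry_spx, Finsupp.finsetSum_apply, sum_eq_single v]
  · simp [spx_apply, hu]
  · intro w hw hwv
    rw [Finsupp.smul_apply, spx_apply, hu, if_neg fun h => hwv ((erase_inj T hw).1 h),
      smul_zero]
  · exact fun h => absurd hv h

lemma eq_zero_of_bdry_eq_zero_of_suppOn {k : ℕ} {Z : ZChain (k + 1)} (hZ : bdry Z = 0)
    {S : Finset ℕ} (hS : suppOn S Z) (hcard : #S ≤ k + 2) : Z = 0 := by
  by_contra hne
  obtain ⟨s, hs⟩ := Finsupp.support_nonempty_iff.2 hne
  have hsS : ∀ t ∈ Z.support, (t : Finset ℕ) = S := fun t ht =>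
    eq_of_subset_of_card_le (hS t ht) (by rw [t.2]; omega)
  have hZs : Z = Z s • spx (k + 1) S := by
    rw [← hsS s hs, ← single_eq_smul_spx]
    ext t
    by_cases ht : t = s
    · rw [ht, Finsupp.single_eq_same]
    · rw [Finsupp.single_eq_of_ne ht, ← Finsupp.notMem_support_iff]
      exact fun htZ => ht (Subtype.ext ((hsS t htZ).trans (hsS s hs).symm))
  obtain ⟨v, hv⟩ : S.Nonempty := by rw [← hsS s hs]; exact card_pos.1 (by rw [s.2]; omega)
  have hface : #(S.erase v) = k + 1 := by rw [card_erase_of_mem hv, ← hsS s hs, s.2]; rfl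
  have hcoef := congrArg (fun D => D ⟨S.erase v, hface⟩) (congrArg bdry hZs)
  simp only [hZ, bdry_smul, Finsupp.smul_apply, bdry_spx_apply_erase hv ⟨S.erase v, hface⟩ rfl,
    Finsupp.coe_zero, Pi.zero_apply, smul_eq_mul] at hcoef
  have hsign := posSign_mul_self v S
  exact Finsupp.mem_support_iff.1 hs (by
    rw [← mul_one (Z s), ← hsign, ← mul_assoc, ← hcoef, zero_mul])

lemma znorm_eq_sum {k : ℕ} (M : ZChain k) : znorm M = ∑ s ∈ M.support, (M s).natAbs := rfl

@[simp]
lemma znorm_zero {k : ℕ} : znorm (0 : ZChain k) = 0 := rfl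

lemma znorm_eq_sum_of_support_subset {k : ℕ} {M : ZChain k} {S : Finset (Simp k)}
    (hS : M.support ⊆ S) : znorm M = ∑ s ∈ S, (M s).natAbs :=
  Finsupp.sum_of_support_subset M hS _ fun _ _ => rfl

lemma znorm_add_le {k : ℕ} (M N : ZChain k) : znorm (M + N) ≤ znorm M + znorm N := by
  classical
  rw [znorm_eq_sum_of_support_subset Finsupp.support_add,
    znorm_eq_sum_of_support_subset (subset_union_left (s₂ := N.support)),
    znorm_eq_sum_of_support_subset (subset_union_right (s₁ := M.support)), ← sum_add_distrib]
  exact sum_le_sum fun s _ => Int.natAbs_add_le _ _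

lemma znorm_smul {k : ℕ} (c : ℤ) (M : ZChain k) : znorm (c • M) = c.natAbs * znorm M := by
  rw [znorm_eq_sum_of_support_subset Finsupp.support_smul, znorm_eq_sum, mul_sum]
  exact sum_congr rfl fun s _ => by simp [Int.natAbs_mul]

lemma znorm_sum_smul_le {k : ℕ} {ι : Type*} (I : Finset ι) (c : ι → ℤ)
    (F : ι → ZChain k) :
    znorm (∑ i ∈ I, c i • F i) ≤ ∑ i ∈ I, (c i).natAbs * znorm (F i) := by
  classical
  induction I using Finset.induction_on with
  | empty => simp [znorm]
  | insert i I hi ih =>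
    rw [sum_insert hi, sum_insert hi, ← znorm_smul]
    exact (znorm_add_le _ _).trans (by omega)

section

/-- The paper's projection `K(A, p)` on a single simplex `T`: its image under the vertex map that
fixes `A` and sends every other vertex to `p`, which is `0` unless that map is injective on `T`.
When exactly one vertex `b` of `T` lies outside `A`, the sign is that of deleting `b` from `T`
and then inserting `p`. -/
noncomputable def projSpx (k : ℕ) (A : Finset ℕ) (p : ℕ) (T : Finset ℕ) : ZChain k :=
  if T ⊆ A then spx k T
  else if #(T \ A) = 1 ∧ p ∉ T then
    ∑ b ∈ T \ A, (posSign b T * posSign p (T.erase b)) • spx k (insert p (T.erase b))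
  else 0

variable {k : ℕ} {A T : Finset ℕ} {p b : ℕ}

lemma projSpx_of_subset (hT : T ⊆ A) : projSpx k A p T = spx k T := if_pos hT

lemma not_subset_of_sdiff_eq_singleton (hb : T \ A = {b}) : ¬ T ⊆ A := by
  rw [← sdiff_eq_empty_iff_subset, hb]; exact singleton_ne_empty b

lemma erase_subset_of_sdiff_eq_singleton (hb : T \ A = {b}) : T.erase b ⊆ A := by
  intro x hx
  by_contra hxA
  have : x ∈ T \ A := mem_sdiff.2 ⟨mem_of_mem_erase hx, hxA⟩
  rw [hb, mem_singleton] at this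
  exact ne_of_mem_erase hx this

lemma projSpx_of_sdiff_eq_singleton (hb : T \ A = {b}) (hp : p ∉ T) :
    projSpx k A p T =
      (posSign b T * posSign p (T.erase b)) • spx k (insert p (T.erase b)) := by
  rw [projSpx, if_neg (not_subset_of_sdiff_eq_singleton hb),
    if_pos ⟨by rw [hb, card_singleton], hp⟩, hb, sum_singleton]

lemma projSpx_of_mem (hT : ¬ T ⊆ A) (hp : p ∈ T) : projSpx k A p T = 0 := by
  rw [projSpx, if_neg hT, if_neg fun h => h.2 hp]

lemma projSpx_of_two_le_card_sdiff (hT : 2 ≤ #(T \ A)) : projSpx k A p T = 0 := by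
  have hnot : ¬ T ⊆ A := by rw [← sdiff_eq_empty_iff_subset]; rintro h; simp [h] at hT
  rw [projSpx, if_neg hnot, if_neg fun h => by omega]

lemma bdry_projSpx_of_subset (hT : T ⊆ A) :
    bdry (projSpx (k + 1) A p T) = ∑ v ∈ T, posSign v T • projSpx k A p (T.erase v) := by
  rw [projSpx_of_subset hT, bdry_spx]
  exact sum_congr rfl fun v _ => by rw [projSpx_of_subset ((erase_subset v T).trans hT)]

lemma bdry_projSpx_of_notMem (hb : T \ A = {b}) (hpT : p ∉ T) :
    bdry (projSpx (k + 1) A p T) = ∑ v ∈ T, posSign v T • projSpx k A p (T.erase v) := by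
  have hbT : b ∈ T := (mem_sdiff.1 (hb ▸ mem_singleton_self b)).1
  have hXA := erase_subset_of_sdiff_eq_singleton hb
  have hpX : p ∉ T.erase b := fun h => hpT (mem_of_mem_erase h)
  rw [projSpx_of_sdiff_eq_singleton hb hpT, bdry_smul, bdry_spx, sum_insert hpX,
    ← add_sum_erase T _ hbT, smul_add, erase_insert hpX, projSpx_of_subset hXA, smul_smul,
    posSign_insert_self, smul_sum]
  -- the face of the image opposite `p` is the face of `T` opposite `b`; the other faces of the
  -- image are the images of the faces of `T` opposite the vertices in `A`
  congr 1
  · rw [mul_assoc, posSign_mul_self, mul_one]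
  refine sum_congr rfl fun v hv => ?_
  have hvb : v ≠ b := ne_of_mem_erase hv
  have hvT : v ∈ T := mem_of_mem_erase hv
  have hvp : v ≠ p := fun h => hpT (h ▸ hvT)
  have hbv : (T.erase v) \ A = {b} := by
    rw [erase_sdiff_comm, hb, erase_eq_of_notMem (by simpa using hvb)]
  rw [projSpx_of_sdiff_eq_singleton hbv fun h => hpT (mem_of_mem_erase h), smul_smul,
    smul_smul, erase_insert_of_ne hvp.symm, erase_right_comm (a := v)]
  congr 1
  have hT := posSign_mul_posSign_erase hbT hvT hvb.symm
  have hins := posSign_mul_posSign_erase (mem_insert_of_mem hv) (mem_insert_self p _) hvp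
  rw [erase_insert hpX, erase_insert_of_ne hvp.symm, posSign_insert_self, posSign_insert_self]
    at hins
  have hsq₁ := posSign_mul_self p (T.erase b)
  have hsq₂ := posSign_mul_self p ((T.erase b).erase v)
  linear_combination (-(posSign b T * posSign p (T.erase b) * posSign v (insert p (T.erase b))))
    * hsq₂ + (posSign b T * posSign p (T.erase b) * posSign p ((T.erase b).erase v)) * hins
    - (posSign b T * posSign v (T.erase b) * posSign p ((T.erase b).erase v)) * hsq₁
    - posSign p ((T.erase b).erase v) * hT

lemma bdry_projSpx_of_mem (hpA : p ∈ A) (hb : T \ A = {b}) (hpT : p ∈ T) :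
    bdry (projSpx (k + 1) A p T) = ∑ v ∈ T, posSign v T • projSpx k A p (T.erase v) := by
  have hbT : b ∈ T := (mem_sdiff.1 (hb ▸ mem_singleton_self b)).1
  have hbA : b ∉ A := (mem_sdiff.1 (hb ▸ mem_singleton_self b)).2
  have hpX : p ∈ T.erase b := mem_erase.2 ⟨fun h => hbA (h ▸ hpA), hpT⟩
  have hbp : (T.erase p) \ A = {b} := by
    rw [erase_sdiff_comm, hb, erase_eq_of_notMem (by simpa using ne_of_mem_erase hpX)]
  -- only the faces opposite `b` and `p` survive, and they cancel
  have hrest : ∑ v ∈ (T.erase b).erase p, posSign v T • projSpx k A p (T.erase v) = 0 :=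
    sum_eq_zero fun v hv => by
      have hvp := ne_of_mem_erase hv
      have hvb := ne_of_mem_erase (mem_of_mem_erase hv)
      rw [projSpx_of_mem (fun h => hbA (h (mem_erase.2 ⟨hvb.symm, hbT⟩)))
        (mem_erase.2 ⟨hvp.symm, hpT⟩), smul_zero]
  rw [projSpx_of_mem (not_subset_of_sdiff_eq_singleton hb) hpT, bdry_zero,
    ← add_sum_erase T _ hbT, ← add_sum_erase _ _ hpX, hrest,
    add_zero, projSpx_of_subset (erase_subset_of_sdiff_eq_singleton hb),
    projSpx_of_sdiff_eq_singleton hbp (notMem_erase p T), erase_right_comm, insert_erase hpX,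
    posSign_erase_self, smul_smul, ← add_smul]
  have hswap := posSign_mul_posSign_erase hbT hpT (ne_of_mem_erase hpX).symm
  have hsq := posSign_mul_self p (T.erase b)
  rw [show posSign b T + posSign p T * (posSign b (T.erase p) * posSign p (T.erase b)) = 0 by
    linear_combination posSign p (T.erase b) * hswap - posSign b T * hsq, zero_smul]

lemma bdry_projSpx_of_two_le_card_sdiff (hpA : p ∈ A) (hT : 2 ≤ #(T \ A)) :
    bdry (projSpx (k + 1) A p T) = ∑ v ∈ T, posSign v T • projSpx k A p (T.erase v) := by
  rw [projSpx_of_two_le_card_sdiff hT, bdry_zero]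
  -- a face keeps two vertices outside `A` unless `T \ A = {b₁, b₂}` and the face is opposite
  -- `b₁` or `b₂`; those two faces have the same image, with opposite signs
  have hcard : ∀ v, #(T \ A) - 1 ≤ #((T.erase v) \ A) := fun v => by
    rw [erase_sdiff_comm]; exact pred_card_le_card_erase
  by_cases h3 : 3 ≤ #(T \ A)
  · refine (sum_eq_zero fun v _ => ?_).symm
    rw [projSpx_of_two_le_card_sdiff (by have := hcard v; omega), smul_zero]
  obtain ⟨b₁, b₂, hne, hpair⟩ := card_eq_two.1 (by omega : #(T \ A) = 2)
  have hmem : ∀ {x}, x ∈ ({b₁, b₂} : Finset ℕ) → x ∈ T ∧ x ∉ A := fun hx =>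
    mem_sdiff.1 (hpair ▸ hx)
  have hsub : {b₁, b₂} ⊆ T := fun x hx => (hmem hx).1
  rw [← sum_subset hsub fun v hvT hv => by
    rw [projSpx_of_two_le_card_sdiff (by
      rw [erase_sdiff_comm, erase_eq_of_notMem (hpair ▸ hv)]; omega), smul_zero]]
  rw [sum_pair hne]
  have h₁ : (T.erase b₁) \ A = {b₂} := by
    rw [erase_sdiff_comm, hpair, erase_insert (by simpa using hne)]
  have h₂ : (T.erase b₂) \ A = {b₁} := by
    rw [erase_sdiff_comm, hpair, pair_comm, erase_insert (by simpa using hne.symm)]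
  have hb₁ := hmem (mem_insert_self b₁ {b₂})
  have hb₂ := hmem (mem_insert_of_mem (mem_singleton_self b₂))
  by_cases hpT : p ∈ T
  · rw [projSpx_of_mem (not_subset_of_sdiff_eq_singleton h₁)
        (mem_erase.2 ⟨fun h => hb₁.2 (h ▸ hpA), hpT⟩),
      projSpx_of_mem (not_subset_of_sdiff_eq_singleton h₂)
        (mem_erase.2 ⟨fun h => hb₂.2 (h ▸ hpA), hpT⟩), smul_zero, smul_zero, add_zero]
  rw [projSpx_of_sdiff_eq_singleton h₁ fun h => hpT (mem_of_mem_erase h),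
    projSpx_of_sdiff_eq_singleton h₂ fun h => hpT (mem_of_mem_erase h),
    erase_right_comm (a := b₂), smul_smul, smul_smul, ← add_smul]
  have hswap := posSign_mul_posSign_erase hb₁.1 hb₂.1 hne
  rw [show posSign b₁ T * (posSign b₂ (T.erase b₁) * posSign p ((T.erase b₁).erase b₂)) +
      posSign b₂ T * (posSign b₁ (T.erase b₂) * posSign p ((T.erase b₁).erase b₂)) = 0 by
    linear_combination posSign p ((T.erase b₁).erase b₂) * hswap, zero_smul]

lemma exists_sdiff_eq_singleton (hT : ¬ T ⊆ A) (h2 : ¬ 2 ≤ #(T \ A)) : ∃ b, T \ A = {b} :=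
  card_eq_one.1 (by have := card_pos.2 (sdiff_nonempty.2 hT); omega)

lemma bdry_projSpx (hpA : p ∈ A) (T : Finset ℕ) :
    bdry (projSpx (k + 1) A p T) = ∑ v ∈ T, posSign v T • projSpx k A p (T.erase v) := by
  by_cases hT : T ⊆ A
  · exact bdry_projSpx_of_subset hT
  by_cases h2 : 2 ≤ #(T \ A)
  · exact bdry_projSpx_of_two_le_card_sdiff hpA h2
  obtain ⟨b, hb⟩ := exists_sdiff_eq_singleton hT h2
  by_cases hpT : p ∈ T
  · exact bdry_projSpx_of_mem hpA hb hpT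
  · exact bdry_projSpx_of_notMem hb hpT

lemma projSpx_mem_supported (T : Finset ℕ) :
    projSpx k A p T ∈
      Finsupp.supported ℤ ℤ {s : Simp k | (s : Finset ℕ) ⊆ insert p (T ∩ A)} := by
  by_cases hT : T ⊆ A
  · rw [projSpx_of_subset hT]
    exact spx_mem_supported (P := (· ⊆ insert p (T ∩ A)))
      fun x hx => mem_insert_of_mem (mem_inter.2 ⟨hx, hT hx⟩)
  by_cases h2 : 2 ≤ #(T \ A)
  · rw [projSpx_of_two_le_card_sdiff h2]; exact zero_mem _
  obtain ⟨b, hb⟩ := exists_sdiff_eq_singleton hT h2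
  by_cases hpT : p ∈ T
  · rw [projSpx_of_mem hT hpT]; exact zero_mem _
  rw [projSpx_of_sdiff_eq_singleton hb hpT]
  exact Submodule.smul_mem _ _ (spx_mem_supported (P := (· ⊆ insert p (T ∩ A)))
    (insert_subset_insert p
      (subset_inter (erase_subset b T) (erase_subset_of_sdiff_eq_singleton hb))))

lemma znorm_spx_le_one (T : Finset ℕ) : znorm (spx k T) ≤ 1 := by
  unfold spx; split_ifs <;> simp [znorm]

lemma znorm_projSpx_le_one (T : Finset ℕ) : znorm (projSpx k A p T) ≤ 1 := by
  by_cases hT : T ⊆ A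
  · rw [projSpx_of_subset hT]; exact znorm_spx_le_one T
  by_cases h2 : 2 ≤ #(T \ A)
  · rw [projSpx_of_two_le_card_sdiff h2]; simp [znorm]
  obtain ⟨b, hb⟩ := exists_sdiff_eq_singleton hT h2
  by_cases hpT : p ∈ T
  · rw [projSpx_of_mem hT hpT]; simp [znorm]
  rw [projSpx_of_sdiff_eq_singleton hb hpT, znorm_smul, Int.natAbs_mul, natAbs_posSign,
    natAbs_posSign, one_mul, one_mul]
  exact znorm_spx_le_one _

lemma subset_or_of_projSpx_ne_zero (h : projSpx k A p T ≠ 0) :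
    T ⊆ A ∨ (#(T \ A) = 1 ∧ p ∉ T) := by
  unfold projSpx at h; split_ifs at h with h₁ h₂
  exacts [Or.inl h₁, Or.inr h₂, absurd rfl h]

noncomputable def proj (A : Finset ℕ) (p : ℕ) : ZChain k →ₗ[ℤ] ZChain k :=
  Finsupp.linearCombination ℤ fun s => projSpx k A p s

lemma proj_spx (hT : #T = k + 1) : proj A p (spx k T) = projSpx k A p T := by
  rw [spx, dif_pos hT, proj, Finsupp.linearCombination_single, one_smul]

theorem bdry_proj (hpA : p ∈ A) (M : ZChain (k + 1)) :
    bdry (proj A p M) = proj A p (bdry M) := by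
  induction M using Finsupp.induction_linear with
  | zero => rw [map_zero, bdry_zero, map_zero]
  | add M N hM hN => rw [map_add, bdry_add, bdry_add, hM, hN, map_add]
  | single s c =>
    rw [single_eq_smul_spx, map_smul, bdry_smul, bdry_smul, map_smul, proj_spx s.2,
      bdry_projSpx hpA, bdry_spx, map_sum]
    congr 1
    refine sum_congr rfl fun v hv => ?_
    rw [map_smul, proj_spx (by rw [card_erase_of_mem hv, s.2]; rfl)]

lemma proj_of_suppOn {X : ZChain k} (hX : suppOn A X) : proj A p X = X := by
  rw [proj, Finsupp.linearCombination_apply]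
  conv_rhs => rw [← Finsupp.sum_single X]
  exact Finsupp.sum_congr fun s hs => by
    rw [projSpx_of_subset (hX s hs), single_eq_smul_spx]

lemma suppOn_proj {S : Finset ℕ} {M : ZChain k} (hM : suppOn S M) :
    suppOn (insert p (S ∩ A)) (proj A p M) := by
  rw [suppOn_iff_mem_supported, proj, Finsupp.linearCombination_apply]
  refine Submodule.finsuppSum_mem _ _ _ _ fun s hs => Submodule.smul_mem _ _ ?_
  refine Finsupp.supported_mono (fun t ht => ?_) (projSpx_mem_supported (s : Finset ℕ))
  exact Set.Subset.trans ht
    (insert_subset_insert p (inter_subset_inter_right (hM s (Finsupp.mem_support_iff.2 hs))))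

/-- The image of a cycle on `S` is a cycle on the vertices `insert p (S ∩ A)`, too few to carry
a nonzero one. -/
lemma proj_eq_zero_of_bdry_eq_zero (hpA : p ∈ A) {S : Finset ℕ} {Y : ZChain (k + 1)}
    (hY : bdry Y = 0) (hYS : suppOn S Y) (hcard : #(insert p (S ∩ A)) ≤ k + 2) :
    proj A p Y = 0 :=
  eq_zero_of_bdry_eq_zero_of_suppOn (by rw [bdry_proj hpA, hY, map_zero]) (suppOn_proj hYS)
    hcard

end

section

variable {k : ℕ}

lemma zvol_le {X : ZChain k} {W : ZChain (k + 1)} (hW : bdry W = X) : zvol X ≤ znorm W :=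
  Nat.sInf_le ⟨W, hW, rfl⟩

lemma exists_znorm_eq_zvol {X : ZChain k} {W : ZChain (k + 1)} (hW : bdry W = X) :
    ∃ V : ZChain (k + 1), bdry V = X ∧ znorm V = zvol X :=
  Nat.sInf_mem (s := {m | ∃ V : ZChain (k + 1), bdry V = X ∧ znorm V = m}) ⟨_, W, hW, rfl⟩

lemma znorm_le_of_taut {M N : ZChain (k + 1)} (hM : Taut M) (hN : bdry N = bdry M) :
    znorm M ≤ znorm N :=
  hM ▸ zvol_le hN

/-- Replacing each summand of a taut chain by an optimal filling of its boundary does not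
increase the norm, so when the norm is additive both summands are already optimal. -/
lemma taut_and_taut_of_taut_add {M₁ M₂ : ZChain (k + 1)} (hM : Taut (M₁ + M₂))
    (hnorm : znorm (M₁ + M₂) = znorm M₁ + znorm M₂) : Taut M₁ ∧ Taut M₂ := by
  obtain ⟨V₁, hV₁, hV₁n⟩ := exists_znorm_eq_zvol (rfl : bdry M₁ = _)
  obtain ⟨V₂, hV₂, hV₂n⟩ := exists_znorm_eq_zvol (rfl : bdry M₂ = _)
  have hle := znorm_le_of_taut hM (N := V₁ + V₂) (by rw [bdry_add, bdry_add, hV₁, hV₂])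
  have h₁ := zvol_le (rfl : bdry M₁ = _)
  have h₂ := zvol_le (rfl : bdry M₂ = _)
  have := znorm_add_le V₁ V₂
  constructor <;> (unfold Taut; omega)

lemma znorm_filter_add_znorm_filter_not (M : ZChain k) (P : Simp k → Prop) [DecidablePred P] :
    znorm (M.filter P) + znorm (M.filter fun s => ¬ P s) = znorm M := by
  rw [znorm_eq_sum, znorm_eq_sum, znorm_eq_sum, Finsupp.support_filter, Finsupp.support_filter,
    ← sum_filter_add_sum_filter_not M.support P]
  congr 1
  all_goals exact sum_congr rfl fun s hs => by simp [(mem_filter.1 hs).2]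

theorem exists_taut_split_of_bdry_filter {M : ZChain (k + 1)} (hM : Taut M) {X Y : ZChain k}
    (hbd : bdry M = X + Y) (P : Simp (k + 1) → Prop) [DecidablePred P]
    (hP : bdry (M.filter P) = X) :
    ∃ MX MY : ZChain (k + 1), M = MX + MY ∧ bdry MX = X ∧ bdry MY = Y ∧
      znorm M = znorm MX + znorm MY ∧ Taut MX ∧ Taut MY := by
  have hsplit := Finsupp.filter_add_filter_not M P
  have hnorm := znorm_filter_add_znorm_filter_not M P
  have htaut : Taut (M.filter P + M.filter fun s => ¬ P s) := by rwa [hsplit]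
  refine ⟨_, _, hsplit.symm, hP, ?_, hnorm.symm,
    taut_and_taut_of_taut_add htaut (by rw [hsplit, hnorm])⟩
  rw [← add_right_inj X, ← hbd, ← hP, ← bdry_add, hsplit]

end

section

/-- With `C = A ∩ B`, the simplices that go to the `A`-part of a taut filling. -/
def IsNear (A C T : Finset ℕ) : Prop := #(T \ A) ≤ 1 ∧ (T ⊆ A ∨ Disjoint T C)

variable {n k : ℕ} {A B C T : Finset ℕ} {p q : ℕ}

lemma IsNear.mono {U : Finset ℕ} (h : IsNear A C T) (hU : U ⊆ T) : IsNear A C U :=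
  ⟨(card_le_card (sdiff_subset_sdiff hU le_rfl)).trans h.1,
    h.2.imp hU.trans (Disjoint.mono_left hU)⟩

lemma isNear_of_subset (h : T ⊆ A) : IsNear A C T :=
  ⟨by rw [sdiff_eq_empty_iff_subset.2 h, card_empty]; omega, Or.inl h⟩

lemma card_le_card_inter_add_card_sdiff_add_card_sdiff (T A B : Finset ℕ) :
    #T ≤ #(T ∩ (A ∩ B)) + #(T \ A) + #(T \ B) :=
  calc #T ≤ #(T ∩ (A ∩ B) ∪ T \ A ∪ T \ B) := card_le_card fun x hx => by
        by_cases hA : x ∈ A <;> by_cases hB : x ∈ B <;> simp [hx, hA, hB]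
    _ ≤ _ := (card_union_le _ _).trans (Nat.add_le_add_right (card_union_le _ _) _)

lemma subset_inter_of_isNear_of_isNear (hA : IsNear A (A ∩ B) T) (hB : IsNear B (A ∩ B) T)
    (hT : 3 ≤ #T) : T ⊆ A ∩ B := by
  by_contra h
  have hdisj : Disjoint T (A ∩ B) := by
    rcases hA.2, hB.2 with ⟨hTA | hd, hTB | hd'⟩
    exacts [absurd (subset_inter hTA hTB) h, hd', hd, hd]
  have hcov := card_le_card_inter_add_card_sdiff_add_card_sdiff T A B
  rw [disjoint_iff_inter_eq_empty.1 hdisj, card_empty] at hcov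
  have := hA.1; have := hB.1
  omega

lemma projSpx_eq_zero_of_not_isNear (hT : ¬ IsNear A C T) (hp : #(T \ A) = 1 → p ∈ T) :
    projSpx k A p T = 0 := by
  have hTA : ¬ T ⊆ A := fun h => hT (isNear_of_subset h)
  by_cases h1 : #(T \ A) = 1
  · exact projSpx_of_mem hTA (hp h1)
  · exact projSpx_of_two_le_card_sdiff (by have := card_pos.2 (sdiff_nonempty.2 hTA); omega)

lemma inter_nonempty_of_not_isNear (hT : ¬ IsNear A C T) (h1 : #(T \ A) = 1) :
    (T ∩ C).Nonempty :=
  not_disjoint_iff_nonempty_inter.1 fun hd => hT ⟨h1.le, Or.inr hd⟩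

/-- Centres for the two projections `K(A, p)` and `K(B, q)`: distinct points of `C`, unless `C`
is so small that no simplex can have more than `n` vertices in it. -/
def AdmissibleCenters (n : ℕ) (C : Finset ℕ) (p q : ℕ) : Prop :=
  (p ∈ C ∧ q ∈ C ∧ p ≠ q) ∨ #C ≤ n

lemma card_insert_le_of_mem_or (hp : p ∈ C ∨ #C ≤ n) (hC : #C ≤ n + 2) :
    #(insert p C) ≤ n + 2 := by
  rcases hp with hp | hp
  · rwa [insert_eq_of_mem hp]
  · have := card_insert_le p C; omega

/-- A simplex with one vertex outside `A` and one outside `B` has at least `n + 1` vertices in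
`C`, so it contains one of two distinct points of a set `C` of size at most `n + 2`. -/
lemma mem_or_mem_of_admissibleCenters (hpq : AdmissibleCenters n (A ∩ B) p q)
    (hC : #(A ∩ B) ≤ n + 2) (hT : #T = n + 3) (hTA : #(T \ A) = 1) (hTB : #(T \ B) = 1) :
    p ∈ T ∨ q ∈ T := by
  have hcov := card_le_card_inter_add_card_sdiff_add_card_sdiff T A B
  have hTC := card_le_card (inter_subset_right (s₁ := T) (s₂ := A ∩ B))
  rcases hpq with ⟨hp, hq, hpq⟩ | hsmall
  · by_contra! h
    have hsub : T ∩ (A ∩ B) ⊆ ((A ∩ B).erase p).erase q := fun x hx =>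
      mem_erase.2 ⟨fun hxq => h.2 (hxq ▸ (mem_inter.1 hx).1),
        mem_erase.2 ⟨fun hxp => h.1 (hxp ▸ (mem_inter.1 hx).1), (mem_inter.1 hx).2⟩⟩
    have := card_le_card hsub
    rw [card_erase_of_mem (mem_erase.2 ⟨hpq.symm, hq⟩), card_erase_of_mem hp] at this
    omega
  · omega

/-- A simplex inside `A` is too big to lie in `C`, and if all but one of its vertices lie in `B`
they fill up `C`, which contains `q`. -/
lemma projSpx_eq_zero_of_subset (hTA : T ⊆ A) (hT : #T = n + 3) (hC : #(A ∩ B) ≤ n + 2)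
    (hq : q ∈ A ∩ B ∨ #(A ∩ B) ≤ n) : projSpx k B q T = 0 := by
  have hTB : ¬ T ⊆ B := fun h => by have := card_le_card (subset_inter hTA h); omega
  by_cases h2 : 2 ≤ #(T \ B)
  · exact projSpx_of_two_le_card_sdiff h2
  have hcard : #(T ∩ B) = n + 2 := by
    have := card_inter_add_card_sdiff T B
    have := card_pos.2 (sdiff_nonempty.2 hTB)
    omega
  have hsub : T ∩ B ⊆ A ∩ B := inter_subset_inter_right hTA
  have hsub_card := card_le_card hsub
  have heq : T ∩ B = A ∩ B := eq_of_subset_of_card_le hsub (by omega)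
  refine projSpx_of_mem hTB (mem_of_mem_inter_left (s₂ := B) ?_)
  rw [heq]
  exact hq.resolve_right (by omega)

lemma znorm_projSpx_add_znorm_projSpx_le_one (hpq : AdmissibleCenters n (A ∩ B) p q)
    (hC : #(A ∩ B) ≤ n + 2) (hT : #T = n + 3) :
    znorm (projSpx k A p T) + znorm (projSpx k B q T) ≤ 1 := by
  rcases eq_or_ne (projSpx k A p T) 0 with hA | hA
  · rw [hA, znorm_zero, zero_add]; exact znorm_projSpx_le_one T
  rcases eq_or_ne (projSpx k B q T) 0 with hB | hB
  · rw [hB, znorm_zero, add_zero]; exact znorm_projSpx_le_one T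
  exfalso
  rcases subset_or_of_projSpx_ne_zero hA with hTA | ⟨hTA, hpT⟩
  · exact hB (projSpx_eq_zero_of_subset hTA hT hC (hpq.imp_left fun h => h.2.1))
  rcases subset_or_of_projSpx_ne_zero hB with hTB | ⟨hTB, hqT⟩
  · rw [inter_comm] at hC
    exact hA (projSpx_eq_zero_of_subset hTB hT hC (by rw [inter_comm]; exact hpq.imp_left (·.1)))
  rcases mem_or_mem_of_admissibleCenters hpq hC hT hTA hTB with h | h
  exacts [hpT h, hqT h]

end

section

variable {n : ℕ} {A B : Finset ℕ} {p q : ℕ}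

/-- If `s` is killed by both `K(A, p)` and `K(B, q)`, then `K(A, p) M + K(B, q) M` is a filling
of `X + Y` that is shorter than `M` unless `s` does not occur in `M`. -/
theorem apply_eq_zero_of_projSpx_eq_zero (hC : #(A ∩ B) ≤ n + 2) {X Y : ZChain (n + 1)}
    (hXc : bdry X = 0) (hYc : bdry Y = 0) (hX : suppOn A X) (hY : suppOn B Y)
    {M : ZChain (n + 2)} (hM : Taut M) (hbd : bdry M = X + Y) (hp : p ∈ A) (hq : q ∈ B)
    (hpq : AdmissibleCenters n (A ∩ B) p q) {s : Simp (n + 2)}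
    (hsA : projSpx (n + 2) A p s = 0) (hsB : projSpx (n + 2) B q s = 0) : M s = 0 := by
  by_contra hs0
  have hpC : #(insert p (B ∩ A)) ≤ n + 2 := by
    rw [inter_comm]; exact card_insert_le_of_mem_or (hpq.imp_left (·.1)) hC
  have hqC : #(insert q (A ∩ B)) ≤ n + 2 := card_insert_le_of_mem_or (hpq.imp_left (·.2.1)) hC
  have hN : bdry (proj A p M + proj B q M) = bdry M := by
    rw [bdry_add, bdry_proj hp, bdry_proj hq, hbd, map_add, map_add, proj_of_suppOn hX,
      proj_of_suppOn hY, proj_eq_zero_of_bdry_eq_zero hp hYc hY hpC,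
      proj_eq_zero_of_bdry_eq_zero hq hXc hX hqC, add_zero, zero_add]
  have hNsum : proj A p M + proj B q M =
      ∑ t ∈ M.support, M t • (projSpx (n + 2) A p t + projSpx (n + 2) B q t) := by
    simp only [proj, Finsupp.linearCombination_apply, Finsupp.sum, smul_add, sum_add_distrib]
  have hlt : ∑ t ∈ M.support,
      (M t).natAbs * znorm (projSpx (n + 2) A p t + projSpx (n + 2) B q t) < znorm M := by
    refine sum_lt_sum (fun t _ => ?_) ⟨s, Finsupp.mem_support_iff.2 hs0, ?_⟩
    · calc _ ≤ (M t).natAbs * 1 := Nat.mul_le_mul_left _ ((znorm_add_le _ _).trans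
            (znorm_projSpx_add_znorm_projSpx_le_one hpq hC t.2))
        _ = _ := mul_one _
    · rw [hsA, hsB, add_zero, znorm_zero, mul_zero]; exact Int.natAbs_pos.2 hs0
  have hle := znorm_le_of_taut hM hN
  have hsum := znorm_sum_smul_le M.support (fun t => M t)
    fun t => projSpx (n + 2) A p t + projSpx (n + 2) B q t
  rw [← hNsum] at hsum
  omega

lemma exists_mem_mem_ne {S₁ S₂ : Finset ℕ} (h₁ : S₁.Nonempty) (h₂ : S₂.Nonempty)
    (h : 2 ≤ #(S₁ ∪ S₂)) : ∃ p ∈ S₁, ∃ q ∈ S₂, p ≠ q := by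
  obtain ⟨p, hp⟩ := h₁
  by_cases hq : ∃ q ∈ S₂, q ≠ p
  · obtain ⟨q, hq, hqp⟩ := hq
    exact ⟨p, hp, q, hq, hqp.symm⟩
  push Not at hq
  obtain ⟨x, hx, hxp⟩ := exists_mem_ne (by omega : 1 < #(S₁ ∪ S₂)) p
  obtain ⟨q, hq₂⟩ := h₂
  rcases mem_union.1 hx with hx | hx
  · exact ⟨x, hx, q, hq₂, by rwa [hq q hq₂]⟩
  · exact absurd (hq x hx) hxp

/-- The centres `x ∈ S` for which `K(D, x)` kills a simplex `T` that is not near `D`. -/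
def killingCenters (D S T : Finset ℕ) : Finset ℕ := {x ∈ S | #(T \ D) = 1 → x ∈ T}

lemma killingCenters_nonempty {D C S T : Finset ℕ} (hT : ¬ IsNear D C T) (hCS : C ⊆ S)
    (hS : S.Nonempty) : (killingCenters D S T).Nonempty := by
  by_cases h1 : #(T \ D) = 1
  · obtain ⟨x, hx⟩ := inter_nonempty_of_not_isNear hT h1
    exact ⟨x, mem_filter.2 ⟨hCS (mem_inter.1 hx).2, fun _ => (mem_inter.1 hx).1⟩⟩
  · obtain ⟨x, hx⟩ := hS
    exact ⟨x, mem_filter.2 ⟨hx, fun h => absurd h h1⟩⟩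

lemma two_le_card_killingCenters_union (hn : 1 ≤ n) (hC : n + 1 ≤ #(A ∩ B)) {T : Finset ℕ}
    (hT : #T = n + 3) :
    2 ≤ #(killingCenters A (A ∩ B) T ∪ killingCenters B (A ∩ B) T) := by
  by_cases h : #(T \ A) = 1 ∧ #(T \ B) = 1
  · have := card_le_card_inter_add_card_sdiff_add_card_sdiff T A B
    calc 2 ≤ #(T ∩ (A ∩ B)) := by omega
      _ ≤ _ := card_le_card fun x hx => mem_union_left _
        (mem_filter.2 ⟨(mem_inter.1 hx).2, fun _ => (mem_inter.1 hx).1⟩)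
  · calc 2 ≤ #(A ∩ B) := by omega
      _ ≤ _ := card_le_card fun x hx => by
        rcases not_and_or.1 h with h | h
        · exact mem_union_left _ (mem_filter.2 ⟨hx, fun h' => absurd h' h⟩)
        · exact mem_union_right _ (mem_filter.2 ⟨hx, fun h' => absurd h' h⟩)

lemma exists_admissibleCenters {k : ℕ} (hn : 1 ≤ n) (hA : A.Nonempty) (hB : B.Nonempty)
    {T : Finset ℕ} (hT : #T = n + 3) (hTA : ¬ IsNear A (A ∩ B) T)
    (hTB : ¬ IsNear B (A ∩ B) T) : ∃ p ∈ A, ∃ q ∈ B,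
      AdmissibleCenters n (A ∩ B) p q ∧ projSpx k A p T = 0 ∧ projSpx k B q T = 0 := by
  by_cases hsmall : #(A ∩ B) ≤ n
  · obtain ⟨p, hp⟩ := killingCenters_nonempty hTA inter_subset_left hA
    obtain ⟨q, hq⟩ := killingCenters_nonempty hTB inter_subset_right hB
    exact ⟨p, (mem_filter.1 hp).1, q, (mem_filter.1 hq).1, Or.inr hsmall,
      projSpx_eq_zero_of_not_isNear hTA (mem_filter.1 hp).2,
      projSpx_eq_zero_of_not_isNear hTB (mem_filter.1 hq).2⟩
  have hCne : (A ∩ B).Nonempty := card_pos.1 (by omega)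
  obtain ⟨p, hp, q, hq, hpq⟩ := exists_mem_mem_ne
    (killingCenters_nonempty hTA subset_rfl hCne) (killingCenters_nonempty hTB subset_rfl hCne)
    (two_le_card_killingCenters_union hn (by omega) hT)
  obtain ⟨hpC, hpT⟩ := mem_filter.1 hp
  obtain ⟨hqC, hqT⟩ := mem_filter.1 hq
  exact ⟨p, (mem_inter.1 hpC).1, q, (mem_inter.1 hqC).2, Or.inl ⟨hpC, hqC, hpq⟩,
    projSpx_eq_zero_of_not_isNear hTA hpT, projSpx_eq_zero_of_not_isNear hTB hqT⟩

end

section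

variable {n : ℕ} {A B : Finset ℕ}

lemma bdry_mem_supported {k : ℕ} {P : Finset ℕ → Prop}
    (hP : ∀ {T U}, P T → U ⊆ T → P U)
    {M : ZChain (k + 1)} (hM : M ∈ Finsupp.supported ℤ ℤ {s : Simp (k + 1) | P s}) :
    bdry M ∈ Finsupp.supported ℤ ℤ {u : Simp k | P u} := by
  rw [bdry, Finsupp.sum]
  refine Submodule.sum_mem _ fun s hs => Submodule.smul_mem _ _ ?_
  rw [simpBdry_eq]
  exact Submodule.sum_mem _ fun v _ => Submodule.smul_mem _ _
    (spx_mem_supported (hP ((Finsupp.mem_supported _ _).1 hM hs) (erase_subset v _)))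

lemma filter_mem_supported {k : ℕ} (M : ZChain k) (P : Simp k → Prop) [DecidablePred P] :
    M.filter P ∈ Finsupp.supported ℤ ℤ {s | P s} := by
  rw [Finsupp.mem_supported, Finsupp.support_filter, coe_filter]
  exact fun s hs => hs.2

lemma eq_zero_of_suppOn_empty {k : ℕ} {X : ZChain k} (hX : suppOn ∅ X) : X = 0 := by
  refine Finsupp.support_eq_empty.1 (eq_empty_of_forall_notMem fun s hs => ?_)
  have := s.2
  rw [subset_empty.1 (hX s hs), card_empty] at this
  omega

theorem isNear_or_isNear_of_mem_support (hn : 1 ≤ n) (hC : #(A ∩ B) ≤ n + 2)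
    {X Y : ZChain (n + 1)} (hXc : bdry X = 0) (hYc : bdry Y = 0) (hX : suppOn A X)
    (hY : suppOn B Y) {M : ZChain (n + 2)} (hM : Taut M) (hbd : bdry M = X + Y)
    (hA : A.Nonempty) (hB : B.Nonempty) {s : Simp (n + 2)} (hs : s ∈ M.support) :
    IsNear A (A ∩ B) s ∨ IsNear B (A ∩ B) s := by
  by_contra! h
  obtain ⟨p, hp, q, hq, hpq, hsA, hsB⟩ := exists_admissibleCenters hn hA hB s.2 h.1 h.2
  exact Finsupp.mem_support_iff.1 hs
    (apply_eq_zero_of_projSpx_eq_zero hC hXc hYc hX hY hM hbd hp hq hpq hsA hsB)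

/-- The defect `∂M_X - X = Y - ∂M_Y` is a cycle on faces near both `A` and `B`, i.e. on faces
inside `A ∩ B`, which is too small to carry a nonzero cycle. -/
theorem bdry_filter_isNear (hn : 1 ≤ n) (hC : #(A ∩ B) ≤ n + 2) {X Y : ZChain (n + 1)}
    (hXc : bdry X = 0) (hYc : bdry Y = 0) (hX : suppOn A X) (hY : suppOn B Y)
    {M : ZChain (n + 2)} (hM : Taut M) (hbd : bdry M = X + Y) (hA : A.Nonempty)
    (hB : B.Nonempty) [DecidablePred fun s : Simp (n + 2) => IsNear A (A ∩ B) s] :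
    bdry (M.filter fun s => IsNear A (A ∩ B) s) = X := by
  set MX := M.filter fun s : Simp (n + 2) => IsNear A (A ∩ B) s
  set MY := M.filter fun s : Simp (n + 2) => ¬ IsNear A (A ∩ B) s
  have hsplit : MX + MY = M := Finsupp.filter_add_filter_not M _
  have hD : bdry MX - X = Y - bdry MY := by
    rw [sub_eq_sub_iff_add_eq_add, ← bdry_add, hsplit, hbd, add_comm X]
  have hMY : MY ∈ Finsupp.supported ℤ ℤ {s : Simp (n + 2) | IsNear B (A ∩ B) s} := by
    rw [Finsupp.mem_supported, Finsupp.support_filter, coe_filter]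
    exact fun s hs => (isNear_or_isNear_of_mem_support hn hC hXc hYc hX hY hM hbd hA hB
      hs.1).resolve_left hs.2
  have hnearA :
      bdry MX - X ∈ Finsupp.supported ℤ ℤ {u : Simp (n + 1) | IsNear A (A ∩ B) u} :=
    sub_mem (bdry_mem_supported IsNear.mono (filter_mem_supported M _))
      (Finsupp.supported_mono (fun _ => isNear_of_subset) (suppOn_iff_mem_supported.1 hX))
  have hnearB :
      bdry MX - X ∈ Finsupp.supported ℤ ℤ {u : Simp (n + 1) | IsNear B (A ∩ B) u} := by
    rw [hD]
    exact sub_mem (Finsupp.supported_mono (fun _ => isNear_of_subset)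
      (suppOn_iff_mem_supported.1 hY)) (bdry_mem_supported IsNear.mono hMY)
  refine sub_eq_zero.1 (eq_zero_of_bdry_eq_zero_of_suppOn (S := A ∩ B) ?_ (fun u hu => ?_) hC)
  · rw [bdry_sub, bdry_bdry, hXc, sub_zero]
  · exact subset_inter_of_isNear_of_isNear ((Finsupp.mem_supported _ _).1 hnearA hu)
      ((Finsupp.mem_supported _ _).1 hnearB hu) (by rw [u.2]; omega)

end

end SimplicialChain

open SimplicialChain in
/-- for cycles of dimension `≥ 2`, taut fillings split under
almost disjoint union.  (The cycles `X, Y` have dimension `n + 1`, so the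
hypothesis `1 ≤ n` says the dimension is at least `2`.) -/
theorem taut_splits_of_almost_disjoint {n : ℕ} (hn : 1 ≤ n) (A B : Finset ℕ)
    (h : (A ∩ B).card ≤ n + 2)
    (X Y : ZChain (n + 1)) (hXc : bdry X = 0) (hYc : bdry Y = 0)
    (hX : suppOn A X) (hY : suppOn B Y)
    (M : ZChain (n + 2)) (hM : Taut M) (hbd : bdry M = X + Y) :
    ∃ MX MY : ZChain (n + 2), M = MX + MY ∧ bdry MX = X ∧ bdry MY = Y ∧
      znorm M = znorm MX + znorm MY ∧ Taut MX ∧ Taut MY := by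
  classical
  rcases A.eq_empty_or_nonempty with rfl | hA
  · refine exists_taut_split_of_bdry_filter hM hbd (fun _ => False) ?_
    rw [(Finsupp.filter_eq_zero_iff _ _).2 fun _ h => h.elim, bdry_zero,
      eq_zero_of_suppOn_empty hX]
  rcases B.eq_empty_or_nonempty with rfl | hB
  · refine exists_taut_split_of_bdry_filter hM hbd (fun _ => True) ?_
    rw [(Finsupp.filter_eq_self_iff _ _).2 fun _ _ => trivial, hbd,
      eq_zero_of_suppOn_empty hY, add_zero]
  exact exists_taut_split_of_bdry_filter hM hbd _
    (bdry_filter_isNear hn h hXc hYc hX hY hM hbd hA hB)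
end

section
/- Qvol equals Rvol: for any integral n-cycle X, the minimum L1-norm of a rational filling equals the minimum L1-norm of a real filling of X. -/
/-- The `L¹`-norm of a chain with coefficients in a linear ordered field. -/
noncomputable def fnorm {K : Type} [Field K] [LinearOrder K] [IsStrictOrderedRing K] {n : ℕ} (M : GChain K n) : K :=
  M.sum fun _ c => |c|

/-- The minimal `L¹`-norm of a rational filling. -/
noncomputable def qvol {n : ℕ} (X : GChain ℚ n) : ℝ :=
  sInf {r : ℝ | ∃ M : GChain ℚ (n + 1), bdry M = X ∧ ((fnorm M : ℚ) : ℝ) = r}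

/-- The minimal `L¹`-norm of a real filling. -/
noncomputable def rvol {n : ℕ} (X : GChain ℝ n) : ℝ :=
  sInf {r : ℝ | ∃ M : GChain ℝ (n + 1), bdry M = X ∧ fnorm M = r}

/-- View an integral chain as a rational chain. -/
noncomputable def toQ {n : ℕ} (X : ZChain n) : GChain ℚ n :=
  X.mapRange Int.cast (by simp)

/-- View an integral chain as a real chain. -/
noncomputable def toR {n : ℕ} (X : ZChain n) : GChain ℝ n :=
  X.mapRange Int.cast (by simp)

/-- A rational chain is taut if it is an optimal rational filling of its
boundary. -/
def TautQ {n : ℕ} (M : GChain ℚ (n + 1)) : Prop :=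
  ((fnorm M : ℚ) : ℝ) = qvol (bdry M)

/-!
Write a real filling `M` of a rational cycle `Y` as `M = ∑ⱼ wⱼ Mⱼ` with rational chains `Mⱼ` and
real numbers `wⱼ` that are linearly independent over `ℚ`, with `w₀ = 1`. Since `∂Mⱼ` is rational,
independence of the `wⱼ` forces `∂M₀ = Y` and `∂Mⱼ = 0` for `j ≠ 0`. Hence replacing every `wⱼ`,
`j ≠ 0`, by a nearby rational number still gives a filling of `Y`, now rational, whose norm
exceeds that of `M` by arbitrarily little.
-/

open Finset

variable {R S K : Type} [CommRing R] [CommRing S] {m : ℕ}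

namespace GChain

noncomputable def map (f : R →+* S) : GChain R m →+ GChain S m :=
  Finsupp.mapRange.addMonoidHom f.toAddMonoidHom

@[simp]
lemma map_apply (f : R →+* S) (M : GChain R m) (s : Simp m) : map f M s = f (M s) := rfl

lemma map_smul' (f : R →+* S) (c : R) (M : GChain R m) : map f (c • M) = f c • map f M := by
  ext s; simp

lemma map_single (f : R →+* S) (s : Simp m) (c : R) :
    map f (Finsupp.single s c) = Finsupp.single s (f c) :=
  Finsupp.mapRange_single (hf := map_zero f)

lemma map_simpBdry (f : R →+* S) (s : Simp (m + 1)) : map f (simpBdry R s) = simpBdry S s := by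
  simp [simpBdry, map_sum, map_single]

end GChain

open GChain

lemma bdry_eq_linearCombination (M : GChain R (m + 1)) :
    bdry M = Finsupp.linearCombination R (simpBdry R) M := rfl

lemma bdry_smul (c : R) (M : GChain R (m + 1)) : bdry (c • M) = c • bdry M := by
  simp only [bdry_eq_linearCombination, _root_.map_smul]

lemma bdry_sum {ι : Type} (t : Finset ι) (M : ι → GChain R (m + 1)) :
    bdry (∑ j ∈ t, M j) = ∑ j ∈ t, bdry (M j) := by
  simp only [bdry_eq_linearCombination, map_sum]

lemma bdry_map (f : R →+* S) (M : GChain R (m + 1)) : bdry (map f M) = map f (bdry M) := by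
  have h : bdry (map f M) = M.sum fun s c => f c • simpBdry S s :=
    Finsupp.sum_mapRange_index (hf := map_zero _) fun _ => zero_smul _ _
  rw [h, bdry, map_finsuppSum]
  exact Finsupp.sum_congr fun s _ => by rw [map_smul', map_simpBdry]

section fnorm

variable [Field K] [LinearOrder K] [IsStrictOrderedRing K]

lemma fnorm_eq_sum_of_support_subset (M : GChain K m) {t : Finset (Simp m)} (h : M.support ⊆ t) :
    fnorm M = ∑ s ∈ t, |M s| :=
  Finsupp.sum_of_support_subset M h _ fun _ _ => abs_zero

lemma fnorm_nonneg (M : GChain K m) : 0 ≤ fnorm M :=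
  Finsupp.sum_nonneg fun _ _ => abs_nonneg _

lemma fnorm_add_le (M N : GChain K m) : fnorm (M + N) ≤ fnorm M + fnorm N := by
  rw [fnorm_eq_sum_of_support_subset (M + N) Finsupp.support_add,
    fnorm_eq_sum_of_support_subset M subset_union_left,
    fnorm_eq_sum_of_support_subset N subset_union_right, ← sum_add_distrib]
  exact sum_le_sum fun s _ => abs_add_le (M s) (N s)

lemma fnorm_smul (c : K) (M : GChain K m) : fnorm (c • M) = |c| * fnorm M := by
  rw [fnorm_eq_sum_of_support_subset (c • M) Finsupp.support_smul,
    fnorm_eq_sum_of_support_subset M subset_rfl, mul_sum]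
  simp [abs_mul]

lemma fnorm_sum_le {ι : Type} (t : Finset ι) (M : ι → GChain K m) :
    fnorm (∑ j ∈ t, M j) ≤ ∑ j ∈ t, fnorm (M j) :=
  le_sum_of_subadditive fnorm (by simp [fnorm]) fnorm_add_le t M

lemma fnorm_map_ratCast (M : GChain ℚ m) : fnorm (map (Rat.castHom K) M) = fnorm M := by
  rw [fnorm_eq_sum_of_support_subset (map (Rat.castHom K) M)
    (Finsupp.support_mapRange (hf := map_zero _)),
    fnorm_eq_sum_of_support_subset M subset_rfl]
  simp

end fnorm

theorem GChain.exists_sum_smul_map_ratCast (M : GChain ℝ m) :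
    ∃ (ι : Type) (_ : Fintype ι) (w : ι → ℝ) (u : ι → GChain ℚ m) (j₀ : ι),
      LinearIndependent ℚ w ∧ w j₀ = 1 ∧ M = ∑ j, w j • map (Rat.castHom ℝ) (u j) := by
  -- `w` is a basis of the `ℚ`-span `W` of `1` and the coefficients of `M`, extending `{1}`;
  -- `u j` records the `j`-th coordinates, read through a `ℚ`-linear retraction `π : ℝ → W`.
  let W : Submodule ℚ ℝ := Submodule.span ℚ (insert 1 (Set.range M))
  have hW : ∀ x ∈ insert 1 (Set.range M), x ∈ W := fun _ hx => Submodule.subset_span hx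
  have : FiniteDimensional ℚ W := FiniteDimensional.span_of_finite ℚ (M.finite_range.insert 1)
  let one : W := ⟨1, hW 1 (Set.mem_insert _ _)⟩
  have hone : LinearIndepOn ℚ id {one} := LinearIndepOn.singleton (by simp [one])
  let b := Module.Basis.extend hone
  obtain ⟨π, hπ⟩ := W.subtype.exists_leftInverse_of_injective W.ker_subtype
  refine ⟨_, FiniteDimensional.fintypeBasisIndex b, fun j => b j,
    fun j => M.mapRange (b.coord j ∘ₗ π) (map_zero _), ⟨one, hone.subset_extend _ rfl⟩,
    b.linearIndependent.map' W.subtype W.ker_subtype, ?_, ?_⟩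
  · exact congrArg Subtype.val (Module.Basis.extend_apply_self hone _)
  ext s
  have hπM : π (M s) = ⟨M s, hW _ (Set.mem_insert_of_mem _ ⟨s, rfl⟩)⟩ :=
    LinearMap.congr_fun hπ ⟨M s, _⟩
  have hrepr := congrArg Subtype.val (b.sum_repr (π (M s)))
  rw [hπM] at hrepr
  simp only [AddSubmonoidClass.coe_finsetSum, SetLike.val_smul] at hrepr
  rw [Finsupp.finsetSum_apply]
  refine hrepr.symm.trans (Finset.sum_congr rfl fun j _ => ?_)
  rw [Finsupp.smul_apply, map_apply, Finsupp.mapRange_apply, LinearMap.comp_apply, hπM,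
    Module.Basis.coord_apply, Rat.smul_def, smul_eq_mul, mul_comm]
  rfl

theorem GChain.eq_of_sum_smul_map_ratCast_eq {ι : Type} [Fintype ι] {w : ι → ℝ}
    (hw : LinearIndependent ℚ w) {u v : ι → GChain ℚ m}
    (h : ∑ j, w j • map (Rat.castHom ℝ) (u j) = ∑ j, w j • map (Rat.castHom ℝ) (v j)) :
    u = v := by
  funext j
  ext s
  have hs : ∑ i, (u i s - v i s) • w i = 0 := by
    have := congrArg (· s) h
    simp only [Finsupp.finsetSum_apply, Finsupp.smul_apply, map_apply, smul_eq_mul,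
      eq_ratCast] at this
    simp only [sub_smul, sum_sub_distrib, Rat.smul_def, mul_comm, this, sub_self]
  exact sub_eq_zero.mp (Fintype.linearIndependent_iff.mp hw _ hs j)

theorem exists_ratFilling_fnorm_le {Y : GChain ℚ m} {M : GChain ℝ (m + 1)}
    (hM : bdry M = map (Rat.castHom ℝ) Y) {ε : ℝ} (hε : 0 < ε) :
    ∃ N : GChain ℚ (m + 1), bdry N = Y ∧ ((fnorm N : ℚ) : ℝ) ≤ fnorm M + ε := by
  classical
  obtain ⟨ι, _, w, u, j₀, hw, hj₀, rfl⟩ := exists_sum_smul_map_ratCast M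
  have hbdry : (fun j => bdry (u j)) = Pi.single j₀ Y := by
    have hY : ∑ j, w j • map (Rat.castHom ℝ) ((Pi.single j₀ Y : ι → GChain ℚ m) j) =
        map (Rat.castHom ℝ) Y := by
      rw [Fintype.sum_eq_single j₀ fun j hj => by simp [hj], Pi.single_eq_same, hj₀, one_smul]
    refine eq_of_sum_smul_map_ratCast_eq hw ?_
    rw [hY, ← hM, bdry_sum]
    simp only [bdry_smul, bdry_map]
  set C := ∑ j, fnorm (map (Rat.castHom ℝ) (u j))
  have hC : 0 ≤ C := sum_nonneg fun j _ => fnorm_nonneg _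
  have hδ : 0 < ε / (C + 1) := div_pos hε (by positivity)
  have hq : ∀ j, ∃ q : ℚ, |(q : ℝ) - w j| < ε / (C + 1) ∧ (j = j₀ → q = 1) := by
    intro j
    by_cases hj : j = j₀
    · exact ⟨1, by simpa [hj, hj₀] using hδ, fun _ => rfl⟩
    · obtain ⟨q, hq⟩ := exists_rat_near (w j) hδ
      exact ⟨q, by rwa [abs_sub_comm], fun h => absurd h hj⟩
  choose q hq_near hq₀ using hq
  refine ⟨∑ j, q j • u j, ?_, ?_⟩
  · simp only [bdry_sum, bdry_smul, congrFun hbdry]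
    rw [Fintype.sum_eq_single j₀ fun j hj => by simp [hj], Pi.single_eq_same, hq₀ j₀ rfl, one_smul]
  · have hN : map (Rat.castHom ℝ) (∑ j, q j • u j) = ∑ j, w j • map (Rat.castHom ℝ) (u j) +
        ∑ j, ((q j : ℝ) - w j) • map (Rat.castHom ℝ) (u j) := by
      simp [map_sum, map_smul', sub_smul]
    have hCε : ε / (C + 1) * C ≤ ε := by
      rw [div_mul_eq_mul_div, div_le_iff₀ (by positivity)]
      nlinarith
    calc ((fnorm (∑ j, q j • u j) : ℚ) : ℝ) = fnorm (map (Rat.castHom ℝ) (∑ j, q j • u j)) :=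
          (fnorm_map_ratCast _).symm
      _ ≤ fnorm (∑ j, w j • map (Rat.castHom ℝ) (u j)) +
          ∑ j, |(q j : ℝ) - w j| * fnorm (map (Rat.castHom ℝ) (u j)) := by
        rw [hN]
        refine (fnorm_add_le _ _).trans ?_
        gcongr
        exact (fnorm_sum_le _ _).trans_eq (by simp only [fnorm_smul])
      _ ≤ fnorm (∑ j, w j • map (Rat.castHom ℝ) (u j)) + ε / (C + 1) * C := by
        rw [mul_sum]
        gcongr with j
        exacts [fnorm_nonneg _, (hq_near j).le]
      _ ≤ _ := by linarith

theorem Real.sInf_eq_sInf_of_subset_of_forall_exists_le_add {s t : Set ℝ} (hst : s ⊆ t)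
    (ht : BddBelow t) (happrox : ∀ y ∈ t, ∀ ε > 0, ∃ x ∈ s, x ≤ y + ε) : sInf s = sInf t := by
  rcases t.eq_empty_or_nonempty with rfl | ⟨y₀, hy₀⟩
  · rw [Set.subset_empty_iff.mp hst]
  obtain ⟨x₀, hx₀, -⟩ := happrox y₀ hy₀ 1 one_pos
  refine le_antisymm ?_ (csInf_le_csInf ht ⟨x₀, hx₀⟩ hst)
  refine le_csInf ⟨y₀, hy₀⟩ fun y hy => le_of_forall_pos_le_add fun ε hε => ?_
  obtain ⟨x, hx, hxy⟩ := happrox y hy ε hε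
  exact (csInf_le (ht.mono hst) hx).trans hxy

theorem qvol_eq_rvol_map (Y : GChain ℚ m) : qvol Y = rvol (map (Rat.castHom ℝ) Y) := by
  refine Real.sInf_eq_sInf_of_subset_of_forall_exists_le_add ?_ ⟨0, ?_⟩ ?_
  · rintro _ ⟨N, hN, rfl⟩
    exact ⟨map _ N, by rw [bdry_map, hN], fnorm_map_ratCast N⟩
  · rintro _ ⟨M, -, rfl⟩
    exact fnorm_nonneg M
  · rintro _ ⟨M, hM, rfl⟩ ε hε
    obtain ⟨N, hN, hle⟩ := exists_ratFilling_fnorm_le hM hε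
    exact ⟨_, ⟨N, hN, rfl⟩, hle⟩

theorem qvol_eq_rvol_general {n : ℕ} (X : ZChain (n + 1)) :
    qvol (toQ X) = rvol (toR X) := by
  have hX : toR X = map (Rat.castHom ℝ) (toQ X) := by
    ext s
    simp [toR, toQ]
  rw [hX, qvol_eq_rvol_map]

/-- for any integral cycle, the minimal rational filling volume
equals the minimal real filling volume. -/
theorem qvol_eq_rvol {n : ℕ} (X : ZChain (n + 1)) (hX : bdry X = 0) :
    qvol (toQ X) = rvol (toR X) :=
  qvol_eq_rvol_general X
end
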